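/- arXiv:2401.14062 — 4 statements merged into one kernel-verified Lean document; each statement's English description precedes it below -/
import Mathlib

section
/- Let G be a group, Λ ⊆ G a subset with e ∈ Λ and Λ = Λ⁻¹ (in the context of approximate subgroups), and let r₁ > r₂ > r₃ > r₄ > 0. Write B_r for the closed ball of radius r about e with respect to a bi-invariant metric d on G, and suppose balls are normal (gB_r g⁻¹ = B_r for all g). Assume B_{r₁} ⊆ Λ²B_{r₂}, B_{r₂} ⊆ Λ²B_{r₃}, and B_{r₁+r₃} ∩ Λ⁴ ⊆ Λ²B_{r₄}. Then B_{r₁} ⊆ Λ²B_{r₃+r₄}. -/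
open Pointwise Metric

/-!
Write `g ∈ B_{r₁}` as `g = a c d` with `a, c ∈ Λ²` and `d ∈ B_{r₃}`. Then `a c = g d⁻¹` lies in
`B_{r₁+r₃} ∩ Λ⁴`, so `a c = u v` with `u ∈ Λ²` and `v ∈ B_{r₄}`, and `g = u (v d)` with
`v d ∈ B_{r₄} B_{r₃} ⊆ B_{r₃+r₄}`.
-/

section LeftInvariantBalls

variable {G : Type*} [Group G] [PseudoMetricSpace G] [IsIsometricSMul G G]

theorem dist_mul_self_eq_dist_one (x y : G) : dist (x * y) x = dist y 1 := by
  simpa using dist_mul_left x y 1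

theorem inv_mem_ball_one {x : G} {r : ℝ} (hx : x ∈ ball (1 : G) r) : x⁻¹ ∈ ball (1 : G) r := by
  have h : dist x⁻¹ 1 = dist 1 x := by simpa using (dist_mul_left x x⁻¹ 1).symm
  rw [mem_ball, h, dist_comm]
  exact hx

theorem ball_one_mul_ball_one_subset (r s : ℝ) :
    ball (1 : G) r * ball (1 : G) s ⊆ ball (1 : G) (r + s) := by
  rintro _ ⟨x, hx, y, hy, rfl⟩
  rw [mem_ball] at *
  calc dist (x * y) 1 ≤ dist (x * y) x + dist x 1 := dist_triangle _ _ _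
    _ = dist y 1 + dist x 1 := by rw [dist_mul_self_eq_dist_one x y]
    _ < r + s := by linarith

end LeftInvariantBalls

theorem compounding_interest_general {G : Type*} [Group G] [MetricSpace G]
    (hleft : ∀ g x y : G, dist (g * x) (g * y) = dist x y)
    (Λ : Set G)
    (r₁ r₂ r₃ r₄ : ℝ)
    (H1 : ball (1 : G) r₁ ⊆ Λ ^ 2 * ball (1 : G) r₂)
    (H2 : ball (1 : G) r₂ ⊆ Λ ^ 2 * ball (1 : G) r₃)
    (H3 : ball (1 : G) (r₁ + r₃) ∩ Λ ^ 4 ⊆ Λ ^ 2 * ball (1 : G) r₄) :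
    ball (1 : G) r₁ ⊆ Λ ^ 2 * ball (1 : G) (r₃ + r₄) := by
  have : IsIsometricSMul G G := ⟨fun g => Isometry.of_dist_eq (hleft g)⟩
  intro g hg
  obtain ⟨a, ha, b, hb, rfl⟩ := Set.mem_mul.mp (H1 hg)
  obtain ⟨c, hc, d, hd, rfl⟩ := Set.mem_mul.mp (H2 hb)
  have hac_ball : a * c ∈ ball (1 : G) (r₁ + r₃) := by
    simpa [mul_assoc] using
      ball_one_mul_ball_one_subset r₁ r₃ (Set.mul_mem_mul hg (inv_mem_ball_one hd))
  have hac_pow : a * c ∈ Λ ^ 4 := by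
    rw [show Λ ^ 4 = Λ ^ 2 * Λ ^ 2 by rw [← pow_add]]
    exact Set.mul_mem_mul ha hc
  obtain ⟨u, hu, v, hv, huv⟩ := Set.mem_mul.mp (H3 ⟨hac_ball, hac_pow⟩)
  refine Set.mem_mul.mpr ⟨u, hu, v * d, ?_, by rw [← mul_assoc, huv, mul_assoc]⟩
  rw [add_comm]
  exact ball_one_mul_ball_one_subset r₄ r₃ (Set.mul_mem_mul hv hd)

/-- Compounding interest claim: with `B_r` the ball of radius `r` about the identity of a
group with bi-invariant metric, and `Λ` symmetric containing the identity, the inclusions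
`B_{r₁} ⊆ Λ²B_{r₂}`, `B_{r₂} ⊆ Λ²B_{r₃}` and `B_{r₁+r₃} ∩ Λ⁴ ⊆ Λ²B_{r₄}` imply
`B_{r₁} ⊆ Λ²B_{r₃+r₄}`. -/
theorem compounding_interest {G : Type*} [Group G] [MetricSpace G]
    (hleft : ∀ g x y : G, dist (g * x) (g * y) = dist x y)
    (hright : ∀ g x y : G, dist (x * g) (y * g) = dist x y)
    (Λ : Set G) (hΛ1 : (1 : G) ∈ Λ) (hΛsymm : Λ⁻¹ = Λ)
    (r₁ r₂ r₃ r₄ : ℝ) (h12 : r₂ < r₁) (h23 : r₃ < r₂) (h34 : r₄ < r₃) (h4 : 0 < r₄)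
    (H1 : ball (1 : G) r₁ ⊆ Λ ^ 2 * ball (1 : G) r₂)
    (H2 : ball (1 : G) r₂ ⊆ Λ ^ 2 * ball (1 : G) r₃)
    (H3 : ball (1 : G) (r₁ + r₃) ∩ Λ ^ 4 ⊆ Λ ^ 2 * ball (1 : G) r₄) :
    ball (1 : G) r₁ ⊆ Λ ^ 2 * ball (1 : G) (r₃ + r₄) :=
  compounding_interest_general hleft Λ r₁ r₂ r₃ r₄ H1 H2 H3
end

section
/- Let G be a compact semi-simple Lie group with Haar probability measure μ, H a proper closed normal subgroup with Haar probability measure μ_H, and π: G → G/H the projection with μ_{G/H} the Haar probability measure on G/H. Then for any measurable subsets X ⊆ H and Y ⊆ G with XY measurable, μ(XY) ≥ μ_H(X)·μ_{G/H}(π(Y)) (assuming π(Y) is measurable). -/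
open MeasureTheory Pointwise

private lemma key_lemma' {G : Type*} [Group G] [TopologicalSpace G] [IsTopologicalGroup G]
    [MeasurableSpace G] [BorelSpace G]
    (μ : Measure G) [IsFiniteMeasure μ] [μ.IsMulLeftInvariant]
    (H : Subgroup G) [MeasurableSpace H] [BorelSpace H]
    (μH : Measure H) [IsProbabilityMeasure μH]
    (U K : Set G) (hU : IsOpen U) (hK : IsCompact K)
    (t : ENNReal)
    (ht : ∀ g ∈ K, ∃ C : Set H, IsCompact C ∧ (∀ h ∈ C, (h : G) * g ∈ U) ∧ t ≤ μH C) :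
    t * μ K ≤ μ U := by
  classical
  have hm : Continuous (fun p : H × G => (p.1 : G) * p.2) :=
    (continuous_subtype_val.comp continuous_fst).mul continuous_snd
  have hN : IsOpen ((fun p : H × G => (p.1 : G) * p.2) ⁻¹' U) := hU.preimage hm
  have main : ∀ g ∈ K, ∃ (O : Set H) (V : Set G), IsOpen O ∧ IsOpen V ∧ g ∈ V ∧
      t ≤ μH O ∧ ∀ h ∈ O, ∀ v ∈ V, (h : G) * v ∈ U := by
    intro g hg
    obtain ⟨C, hCc, hCU, hCt⟩ := ht g hg
    have hsub : C ×ˢ ({g} : Set G) ⊆ (fun p : H × G => (p.1 : G) * p.2) ⁻¹' U := by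
      rintro ⟨h, x⟩ ⟨hh, hx⟩
      simp only [Set.mem_singleton_iff] at hx
      subst hx
      exact hCU h hh
    obtain ⟨O, V, hO, hV, hCO, hgV, hOV⟩ :=
      generalized_tube_lemma hCc isCompact_singleton hN hsub
    exact ⟨O, V, hO, hV, hgV rfl, le_trans hCt (measure_mono hCO),
      fun h hh v hv => hOV (Set.mk_mem_prod hh hv)⟩
  choose O V hO hV hgV htO hOV using main
  obtain ⟨s, hs⟩ := hK.elim_finite_subcover (fun k : K => V k k.2)
    (fun k => hV k k.2) (fun g hg => Set.mem_iUnion.2 ⟨⟨g, hg⟩, hgV g hg⟩)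
  set W : Set G := ⋃ j ∈ s, V j j.2 with hW
  have hWopen : IsOpen W := isOpen_biUnion fun j _ => hV j j.2
  set F : H × G → ENNReal := fun p =>
    ⨆ j : s, ((O j.1 j.1.2) ×ˢ (V j.1 j.1.2)).indicator (fun _ => (1 : ENNReal)) p with hF
  have hFmeas : Measurable F := by
    apply Measurable.iSup
    intro j
    exact measurable_const.indicator
      (((hO j.1 j.1.2).measurableSet).prod ((hV j.1 j.1.2).measurableSet))
  -- lower bound
  have lower : t * μ W ≤ ∫⁻ g, ∫⁻ h, F (h, g) ∂μH ∂μ := by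
    rw [← lintegral_indicator_const hWopen.measurableSet t]
    apply lintegral_mono
    intro g
    by_cases hg : g ∈ W
    · rw [Set.indicator_of_mem hg]
      obtain ⟨j, hjs, hjV⟩ := Set.mem_iUnion₂.1 hg
      calc t ≤ μH (O j j.2) := htO j j.2
        _ = ∫⁻ h, (O j j.2).indicator (fun _ => (1 : ENNReal)) h ∂μH := by
              rw [lintegral_indicator_const (hO j j.2).measurableSet, one_mul]
        _ ≤ ∫⁻ h, F (h, g) ∂μH := by
              apply lintegral_mono
              intro h
              by_cases hh : h ∈ O j j.2
              · rw [Set.indicator_of_mem hh, hF]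
                simp only
                refine le_trans ?_ (le_iSup _ (⟨j, hjs⟩ : s))
                rw [Set.indicator_of_mem (Set.mk_mem_prod hh hjV)]
              · rw [Set.indicator_of_notMem hh]
                exact zero_le
    · rw [Set.indicator_of_notMem hg]
      exact zero_le
  have swap : ∫⁻ g, ∫⁻ h, F (h, g) ∂μH ∂μ = ∫⁻ h, ∫⁻ g, F (h, g) ∂μ ∂μH :=
    (lintegral_lintegral_swap (hFmeas.aemeasurable)).symm
  have upper : ∫⁻ h, ∫⁻ g, F (h, g) ∂μ ∂μH ≤ μ U := by
    have key : ∀ h : H, ∫⁻ g, F (h, g) ∂μ ≤ μ U := by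
      intro h
      have hUm : MeasurableSet ((fun g : G => (h : G) * g) ⁻¹' U) :=
        (hU.preimage (continuous_mul_left _)).measurableSet
      calc ∫⁻ g, F (h, g) ∂μ
          ≤ ∫⁻ g, ((fun g : G => (h : G) * g) ⁻¹' U).indicator
              (fun _ => (1 : ENNReal)) g ∂μ := by
            apply lintegral_mono
            intro g
            by_cases hg : (h : G) * g ∈ U
            · rw [Set.indicator_of_mem (show g ∈ (fun g : G => (h : G) * g) ⁻¹' U from hg)]
              rw [hF]
              simp only
              refine iSup_le fun j => ?_
              by_cases hp : ((h, g) : H × G) ∈ (O j.1 j.1.2) ×ˢ (V j.1 j.1.2) <;> simp [hp]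
            · rw [Set.indicator_of_notMem (show g ∉ (fun g : G => (h : G) * g) ⁻¹' U from hg)]
              rw [hF]
              simp only
              by_contra hne
              push_neg at hne
              have h2 : (⨆ j : s, ((O j.1 j.1.2) ×ˢ (V j.1 j.1.2)).indicator
                  (fun _ => (1 : ENNReal)) (h, g)) ≠ 0 := hne.ne'
              rw [ne_eq, ENNReal.iSup_eq_zero] at h2
              push_neg at h2
              obtain ⟨j, hj⟩ := h2
              rw [Set.indicator_apply_ne_zero] at hj
              have hp := hj.1
              exact hg (hOV j.1 j.1.2 h hp.1 g hp.2)
        _ = μ ((fun g : G => (h : G) * g) ⁻¹' U) := by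
            rw [lintegral_indicator_const hUm, one_mul]
        _ = μ U := measure_preimage_mul μ (h : G) U
    calc ∫⁻ h, ∫⁻ g, F (h, g) ∂μ ∂μH ≤ ∫⁻ _, μ U ∂μH := lintegral_mono key
      _ = μ U := by simp
  calc t * μ K ≤ t * μ W := mul_le_mul_right (measure_mono hs) t
    _ ≤ ∫⁻ g, ∫⁻ h, F (h, g) ∂μH ∂μ := lower
    _ = ∫⁻ h, ∫⁻ g, F (h, g) ∂μ ∂μH := swap
    _ ≤ μ U := upper

/-- For a proper closed normal subgroup `H` of a compact group `G`, with Haar probability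
measures `μ`, `μ_H`, `μ_{G/H}` on `G`, `H` and `G/H`, and measurable `X ⊆ H`, `Y ⊆ G`,
one has `μ(XY) ≥ μ_H(X)·μ_{G/H}(π(Y))`. -/
theorem quotient_product_lower_bound {G : Type*} [Group G] [TopologicalSpace G]
    [IsTopologicalGroup G] [CompactSpace G] [MeasurableSpace G] [BorelSpace G]
    (μ : Measure G) [μ.IsHaarMeasure] [IsProbabilityMeasure μ]
    (H : Subgroup G) [H.Normal] (hHclosed : IsClosed (H : Set G))
    (hHproper : (H : Set G) ≠ Set.univ)
    [MeasurableSpace H] [BorelSpace H]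
    (μH : Measure H) [μH.IsHaarMeasure] [IsProbabilityMeasure μH]
    [MeasurableSpace (G ⧸ H)] [BorelSpace (G ⧸ H)]
    (μQ : Measure (G ⧸ H)) [μQ.IsHaarMeasure] [IsProbabilityMeasure μQ]
    (X Y : Set G) (hXH : X ⊆ (H : Set G))
    (hX : MeasurableSet X) (hY : MeasurableSet Y)
    (hXY : MeasurableSet (X * Y))
    (hXmeasH : MeasurableSet ((Subtype.val : H → G) ⁻¹' X))
    (hπY : MeasurableSet ((QuotientGroup.mk : G → G ⧸ H) '' Y)) :
    μH ((Subtype.val : H → G) ⁻¹' X) * μQ ((QuotientGroup.mk : G → G ⧸ H) '' Y)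
      ≤ μ (X * Y) := by
  classical
  haveI hcH : CompactSpace H := isCompact_iff_compactSpace.mp hHclosed.isCompact
  -- Step 1: μQ is the pushforward of μ
  have hmkc : Continuous (QuotientGroup.mk : G → G ⧸ H) := continuous_quotient_mk'
  have hQ : μ.map (QuotientGroup.mk : G → G ⧸ H) = μQ := by
    haveI h1 : Measure.IsHaarMeasure (μ.map (QuotientGroup.mk : G → G ⧸ H)) :=
      Measure.isHaarMeasure_map_of_isFiniteMeasure μ (QuotientGroup.mk' H) hmkc
        (QuotientGroup.mk'_surjective H)
    haveI h2 : IsProbabilityMeasure (μ.map (QuotientGroup.mk : G → G ⧸ H)) :=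
      Measure.isProbabilityMeasure_map hmkc.measurable.aemeasurable
    exact Measure.isHaarMeasure_eq_of_isProbabilityMeasure _ _
  set T : Set G := (QuotientGroup.mk : G → G ⧸ H) ⁻¹' ((QuotientGroup.mk : G → G ⧸ H) '' Y)
    with hTdef
  have hTm : MeasurableSet T := hπY.preimage hmkc.measurable
  have hQY : μQ ((QuotientGroup.mk : G → G ⧸ H) '' Y) = μ T := by
    rw [← hQ, Measure.map_apply hmkc.measurable hπY]
  rw [hQY]
  -- Step 2: right invariance of μH
  have hright : ∀ (k : H) (C : Set H), μH ((MeasurableEquiv.mulRight k) ⁻¹' C) = μH C := by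
    intro k C
    haveI h1 : Measure.IsHaarMeasure (μH.map (MeasurableEquiv.mulRight k)) :=
      Measure.isHaarMeasure_map_mul_right μH k
    haveI h2 : IsProbabilityMeasure (μH.map (MeasurableEquiv.mulRight k)) :=
      Measure.isProbabilityMeasure_map (MeasurableEquiv.mulRight k).measurable.aemeasurable
    have h3 : μH.map (MeasurableEquiv.mulRight k) = μH :=
      Measure.isHaarMeasure_eq_of_isProbabilityMeasure _ _
    rw [← MeasurableEquiv.map_apply (MeasurableEquiv.mulRight k) C, h3]
  -- Step 3: regularity reductions
  rw [Set.measure_eq_iInf_isOpen (X * Y) μ,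
    MeasurableSet.measure_eq_iSup_isCompact hXmeasH μH,
    MeasurableSet.measure_eq_iSup_isCompact hTm μ]
  refine le_iInf fun U => le_iInf fun hXYU => le_iInf fun hUopen => ?_
  simp_rw [ENNReal.iSup_mul, ENNReal.mul_iSup]
  refine iSup_le fun C => iSup_le fun hCX => iSup_le fun hCc => iSup_le fun K =>
    iSup_le fun hKT => iSup_le fun hKc => ?_
  -- Step 4: apply the key lemma
  refine key_lemma' μ H μH U K hUopen hKc (μH C) ?_
  intro g hg
  obtain ⟨y, hyY, hyg⟩ := hKT hg
  have hyg' : (y : G)⁻¹ * g ∈ H := QuotientGroup.eq.mp hyg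
  have hk : g * y⁻¹ ∈ H := by
    have h2 := ‹H.Normal›.conj_mem _ hyg' y
    simpa using h2
  set k : H := ⟨g * y⁻¹, hk⟩ with hkdef
  refine ⟨(MeasurableEquiv.mulRight k) ⁻¹' C, ?_, ?_, le_of_eq (hright k C).symm⟩
  · have : (MeasurableEquiv.mulRight k) ⁻¹' C = (fun h : H => h * k⁻¹) '' C := by
      ext h
      constructor
      · intro hh
        exact ⟨h * k, hh, by group⟩
      · rintro ⟨c, hc, rfl⟩
        simpa [MeasurableEquiv.mulRight] using hc
    rw [this]
    exact hCc.image (continuous_mul_right _)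
  · intro h hh
    have hh' : h * k ∈ C := hh
    have hmem : ((h * k : H) : G) ∈ X := hCX hh'
    have : (h : G) * g = ((h * k : H) : G) * y := by
      push_cast [hkdef]
      group
    have hXYmem : (h : G) * g ∈ X * Y := by
      rw [this]
      exact Set.mul_mem_mul hmem hyY
    exact hXYU hXYmem
end

section
/- Let d ≥ 1 and let f: ℝ^d → [0,∞) be measurable with 0 < ∫ f < ∞. Suppose that for almost every x, y ∈ ℝ^d with f(x)f(y) > 0, one has f((x+y)/2) ≥ f(y). Let A_{>0} := {x : f(x) > 0} (the essential support) and for ε > 0 let A_ε := {x : f(x) ≥ (1-ε)·ess sup f}. Then the Lebesgue measure of A_{>0} \ A_ε is zero for every ε > 0; consequently f equals (ess sup f)·𝟙_{A_{>0}} almost everywhere. -/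
open MeasureTheory Filter Metric Set Topology

private lemma key_lemma {d : ℕ} (hd : 1 ≤ d) (f : (Fin d → ℝ) → ENNReal) (hf : Measurable f)
    (hmid : ∀ᵐ p : (Fin d → ℝ) × (Fin d → ℝ) ∂(volume.prod volume),
      0 < f p.1 → 0 < f p.2 → f p.2 ≤ f ((2⁻¹ : ℝ) • (p.1 + p.2)))
    {t : ENNReal} (ht : 0 < t) (hB : 0 < volume {x | t ≤ f x}) :
    volume ({x | 0 < f x} \ {x | t ≤ f x}) = 0 := by
  classical
  set B : Set (Fin d → ℝ) := {x | t ≤ f x} with hBdef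
  have hBm : MeasurableSet B := hf measurableSet_Ici
  -- find a ball where B has positive measure
  have hcover : (⋃ n : ℕ, B ∩ closedBall (0 : Fin d → ℝ) n) = B := by
    ext y
    simp only [mem_iUnion, mem_inter_iff]
    constructor
    · rintro ⟨n, hy, -⟩; exact hy
    · intro hy
      obtain ⟨n, hn⟩ := exists_nat_ge (‖y‖)
      exact ⟨n, hy, by simpa [mem_closedBall, dist_zero_right] using hn⟩
  obtain ⟨n₀, hn₀⟩ : ∃ n : ℕ, volume (B ∩ closedBall (0 : Fin d → ℝ) n) ≠ 0 := by
    by_contra h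
    push_neg at h
    have : volume B = 0 := by
      rw [← hcover]
      exact measure_iUnion_null fun n => h n
    exact absurd this hB.ne'
  set r : ℝ := (n₀ : ℝ) + 1 with hrdef
  have hr : 0 < r := by positivity
  set V : ENNReal := volume (B ∩ closedBall (0 : Fin d → ℝ) r) with hVdef
  have hV : 0 < V := by
    refine lt_of_lt_of_le (pos_iff_ne_zero.2 hn₀) (measure_mono ?_)
    exact inter_subset_inter_right _ (closedBall_subset_closedBall (by simp [hrdef]))
  have hVfin : V ≠ ⊤ :=
    (lt_of_le_of_lt (measure_mono inter_subset_right) measure_closedBall_lt_top).ne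
  -- a.e. pointwise statements
  have h1 := Measure.ae_ae_of_ae_prod hmid
  have h2 := Besicovitch.ae_tendsto_measure_inter_div_of_measurableSet volume hBm
  have hae : ∀ᵐ x, 0 < f x → t ≤ f x := by
    filter_upwards [h1, h2] with x hx1 hx2 hxS
    by_contra hxB
    have hxB' : x ∉ B := hxB
    -- density of B at x tends to 0
    rw [indicator_of_notMem hxB'] at hx2
    -- the homothety
    set ψ : (Fin d → ℝ) → (Fin d → ℝ) := fun y => AffineMap.homothety x (2⁻¹ : ℝ) y with hψ
    have hψB : volume (ψ '' B \ B) = 0 := by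
      set N : Set (Fin d → ℝ) :=
        {y | ¬ (0 < f x → 0 < f y → f y ≤ f ((2⁻¹ : ℝ) • (x + y)))} with hN
      have hNnull : volume N = 0 := ae_iff.1 hx1
      have hsub : ψ '' B \ B ⊆ ψ '' N := by
        rintro z ⟨⟨y, hyB, rfl⟩, hzB⟩
        refine ⟨y, ?_, rfl⟩
        intro hy
        apply hzB
        have hyS : 0 < f y := lt_of_lt_of_le ht hyB
        have : f y ≤ f ((2⁻¹ : ℝ) • (x + y)) := hy hxS hyS
        have heq : (2⁻¹ : ℝ) • (x + y) = ψ y := by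
          simp only [hψ, AffineMap.homothety_apply, vsub_eq_sub, vadd_eq_add]
          module
        rw [heq] at this
        exact le_trans hyB this
      refine measure_mono_null hsub ?_
      have := Measure.addHaar_image_homothety (volume : Measure (Fin d → ℝ)) x (2⁻¹ : ℝ) N
      rw [this, hNnull, mul_zero]
    -- iterate
    have hiter : ∀ n : ℕ,
        volume (AffineMap.homothety x ((2:ℝ)⁻¹ ^ n) '' B \ B) = 0 := by
      intro n
      induction n with
      | zero => simp [AffineMap.homothety_one]
      | succ n ih =>
        have hcomp : AffineMap.homothety x ((2:ℝ)⁻¹ ^ (n+1)) '' B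
            = ψ '' (AffineMap.homothety x ((2:ℝ)⁻¹ ^ n) '' B) := by
          rw [← image_comp]
          congr 1
          have : ((2:ℝ)⁻¹ ^ (n+1)) = (2:ℝ)⁻¹ * (2:ℝ)⁻¹ ^ n := by ring
          rw [this, AffineMap.homothety_mul]
          rfl
        set T : Set (Fin d → ℝ) := AffineMap.homothety x ((2:ℝ)⁻¹ ^ n) '' B with hT
        have hsplit : ψ '' T \ B ⊆ ψ '' (T \ B) ∪ (ψ '' B \ B) := by
          rintro z ⟨⟨y, hyT, rfl⟩, hzB⟩
          by_cases hyB : y ∈ B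
          · exact Or.inr ⟨⟨y, hyB, rfl⟩, hzB⟩
          · exact Or.inl ⟨y, ⟨hyT, hyB⟩, rfl⟩
        rw [hcomp]
        refine measure_mono_null hsplit (measure_union_null ?_ hψB)
        have := Measure.addHaar_image_homothety (volume : Measure (Fin d → ℝ)) x (2⁻¹ : ℝ) (T \ B)
        rw [this, ih, mul_zero]
    -- quantitative density lower bound along a sequence of radii
    set C : ℝ := r + ‖x‖ with hC
    have hC0 : 0 < C := by positivity
    set W : ENNReal := volume (ball (0 : Fin d → ℝ) 1) with hW
    set κ : ENNReal := V / (ENNReal.ofReal (C ^ d) * W) with hκ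
    have hκpos : 0 < κ :=
      ENNReal.div_pos hV.ne' (ENNReal.mul_ne_top ENNReal.ofReal_ne_top measure_ball_lt_top.ne)
    have hfinrank : Module.finrank ℝ (Fin d → ℝ) = d := Module.finrank_fin_fun ℝ
    have hratio : ∀ n : ℕ, κ ≤ volume (B ∩ closedBall x ((2:ℝ)⁻¹ ^ n * C)) /
        volume (closedBall x ((2:ℝ)⁻¹ ^ n * C)) := by
      intro n
      set c : ℝ := (2:ℝ)⁻¹ ^ n with hc'
      have hc : 0 < c := by positivity
      set I : Set (Fin d → ℝ) := AffineMap.homothety x c '' (B ∩ closedBall 0 r) with hI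
      have hIsub : I ⊆ closedBall x (c * C) := by
        rintro z ⟨y, ⟨hyB, hyb⟩, rfl⟩
        rw [mem_closedBall]
        have heq : AffineMap.homothety x c y = c • (y - x) + x := by
          simp [AffineMap.homothety_apply]
        rw [heq, dist_eq_norm]
        have : c • (y - x) + x - x = c • (y - x) := by abel
        rw [this, norm_smul, Real.norm_eq_abs, abs_of_pos hc]
        have hyb' : ‖y‖ ≤ r := by simpa [dist_zero_right] using hyb
        have : ‖y - x‖ ≤ C := le_trans (norm_sub_le _ _) (by simp only [hC]; linarith)
        exact mul_le_mul_of_nonneg_left this hc.le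
      have hIvol : volume I = ENNReal.ofReal (c ^ d) * V := by
        rw [hI, Measure.addHaar_image_homothety, hfinrank, abs_of_pos (pow_pos hc d), hVdef]
      have hIB : volume (I \ B) = 0 :=
        measure_mono_null (diff_subset_diff_left (image_mono inter_subset_left)) (hiter n)
      have hle : volume I ≤ volume (B ∩ closedBall x (c * C)) := by
        calc volume I ≤ volume (I ∩ B) + volume (I \ B) := measure_le_inter_add_diff _ _ _
          _ = volume (I ∩ B) := by rw [hIB, add_zero]
          _ ≤ volume (B ∩ closedBall x (c * C)) :=
            measure_mono fun z hz => ⟨hz.2, hIsub hz.1⟩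
      have hballvol : volume (closedBall x (c * C)) =
          ENNReal.ofReal (c ^ d) * (ENNReal.ofReal (C ^ d) * W) := by
        rw [Measure.addHaar_closedBall _ x (mul_nonneg hc.le hC0.le), hfinrank, mul_pow,
          ENNReal.ofReal_mul (pow_nonneg hc.le _), mul_assoc]
      calc κ = (ENNReal.ofReal (c ^ d) * V) /
            (ENNReal.ofReal (c ^ d) * (ENNReal.ofReal (C ^ d) * W)) :=
          (ENNReal.mul_div_mul_left _ _ (by positivity) ENNReal.ofReal_ne_top).symm
        _ ≤ volume (B ∩ closedBall x (c * C)) / volume (closedBall x (c * C)) := by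
            rw [← hIvol, hballvol]
            exact ENNReal.div_le_div_right hle _
    have hRt : Tendsto (fun n : ℕ => (2:ℝ)⁻¹ ^ n * C) atTop (𝓝[>] 0) := by
      apply tendsto_nhdsWithin_of_tendsto_nhds_of_eventually_within
      · have h0 := tendsto_pow_atTop_nhds_zero_of_lt_one (by norm_num : (0:ℝ) ≤ 2⁻¹)
          (by norm_num : (2:ℝ)⁻¹ < 1)
        simpa using h0.mul_const C
      · exact Eventually.of_forall fun n => mem_Ioi.2 (by positivity)
    have hev : ∀ᶠ n in atTop, volume (B ∩ closedBall x ((2:ℝ)⁻¹ ^ n * C)) /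
        volume (closedBall x ((2:ℝ)⁻¹ ^ n * C)) < κ :=
      hRt.eventually (hx2.eventually_lt_const hκpos)
    obtain ⟨n, hn⟩ := hev.exists
    exact absurd (hratio n) (not_le.2 hn)
  refine measure_mono_null (fun z hz => ?_) (ae_iff.1 hae)
  exact fun h => hz.2 (h hz.1)


/-- If `f : ℝ^d → [0,∞)` is measurable with `0 < ∫ f < ∞` and satisfies
`f((x+y)/2) ≥ f(y)` for a.e. `x, y` with `f(x)f(y) > 0`, then for every `ε > 0` almost
every point of the essential support `A_{>0}` lies in `A_ε = {f ≥ (1-ε)·ess sup f}`;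
consequently `f = (ess sup f)·𝟙_{A_{>0}}` almost everywhere. -/
theorem density_function_is_indicator {d : ℕ} (hd : 1 ≤ d)
    (f : (Fin d → ℝ) → ENNReal) (hf : Measurable f)
    (hint_pos : 0 < ∫⁻ x, f x) (hint_fin : ∫⁻ x, f x < ⊤)
    (hmid : ∀ᵐ p : (Fin d → ℝ) × (Fin d → ℝ) ∂(volume.prod volume),
      0 < f p.1 → 0 < f p.2 → f p.2 ≤ f ((2⁻¹ : ℝ) • (p.1 + p.2))) :
    (∀ ε : ℝ, 0 < ε →
      volume ({x | 0 < f x} \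
        {x | ENNReal.ofReal (1 - ε) * essSup f volume ≤ f x}) = 0) ∧
    f =ᵐ[volume] Set.indicator {x | 0 < f x} fun _ => essSup f volume := by
  classical
  set M := essSup f volume with hM
  have hM0 : M ≠ 0 := by
    intro h
    have hle : ∀ᵐ x, f x ≤ 0 := by
      have := ae_le_essSup (f := f) (μ := (volume : Measure (Fin d → ℝ)))
      rw [← hM, h] at this
      exact this
    have : ∫⁻ x, f x = 0 := by
      rw [lintegral_congr_ae (hle.mono fun x hx => le_antisymm hx zero_le), lintegral_zero]
    exact absurd this hint_pos.ne'
  have hMtop : M ≠ ⊤ := by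
    intro htop
    have hkey : ∀ n : ℕ, ∀ᵐ x, 0 < f x → ((n : ENNReal) + 1) ≤ f x := by
      intro n
      have hpos : 0 < volume {x | ((n : ENNReal) + 1) ≤ f x} := by
        rcases eq_or_ne (volume {x | ((n : ENNReal) + 1) ≤ f x}) 0 with h0 | h0
        · exfalso
          have hae : ∀ᵐ x, f x ≤ (n : ENNReal) + 1 := by
            rw [ae_iff]
            exact measure_mono_null (fun y hy => le_of_lt (not_le.1 hy)) h0
          have h2 := essSup_le_of_ae_le _ hae
          rw [← hM, htop] at h2
          exact absurd h2 (by simp)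
        · exact pos_iff_ne_zero.2 h0
      have hz := key_lemma hd f hf hmid (t := (n : ENNReal) + 1) (lt_of_lt_of_le zero_lt_one le_add_self) hpos
      rw [ae_iff]
      refine measure_mono_null ?_ hz
      intro y hy
      simp only [Set.mem_setOf_eq, Classical.not_imp] at hy
      exact ⟨hy.1, hy.2⟩
    rw [← ae_all_iff] at hkey
    have hfin := ae_lt_top hf hint_fin.ne
    have hall : ∀ᵐ x, f x = 0 := by
      filter_upwards [hkey, hfin] with x hx hxfin
      by_contra h0
      have hxS : 0 < f x := pos_iff_ne_zero.2 h0
      obtain ⟨n, hn⟩ := ENNReal.exists_nat_gt hxfin.ne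
      have h2 : (n : ENNReal) ≤ f x := le_trans le_self_add (hx n hxS)
      exact absurd hn (not_lt.2 h2)
    have : ∫⁻ x, f x = 0 := by
      rw [lintegral_congr_ae hall, lintegral_zero]
    exact absurd this hint_pos.ne'
  have hpart1 : ∀ ε : ℝ, 0 < ε →
      volume ({x | 0 < f x} \ {x | ENNReal.ofReal (1 - ε) * M ≤ f x}) = 0 := by
    intro ε hε
    rcases le_or_gt 1 ε with h1 | h1
    · have h0 : ENNReal.ofReal (1 - ε) = 0 := ENNReal.ofReal_eq_zero.2 (by linarith)
      have huniv : {x | ENNReal.ofReal (1 - ε) * M ≤ f x} = Set.univ := by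
        ext y; simp [h0]
      rw [huniv, Set.diff_univ, measure_empty]
    · have hs0 : 0 < ENNReal.ofReal (1 - ε) * M :=
        ENNReal.mul_pos (ENNReal.ofReal_pos.2 (by linarith)).ne' hM0
      have hsM : ENNReal.ofReal (1 - ε) * M < M := by
        calc ENNReal.ofReal (1 - ε) * M < 1 * M := by
              refine ENNReal.mul_lt_mul_left hM0 hMtop ?_
              rw [← ENNReal.ofReal_one]
              exact (ENNReal.ofReal_lt_ofReal_iff zero_lt_one).2 (by linarith)
          _ = M := one_mul M
      have hpos : 0 < volume {x | ENNReal.ofReal (1 - ε) * M ≤ f x} := by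
        rcases eq_or_ne (volume {x | ENNReal.ofReal (1 - ε) * M ≤ f x}) 0 with h0 | h0
        · exfalso
          have hae : ∀ᵐ x, f x ≤ ENNReal.ofReal (1 - ε) * M := by
            rw [ae_iff]
            exact measure_mono_null (fun y hy => le_of_lt (not_le.1 hy)) h0
          have h2 := essSup_le_of_ae_le _ hae
          rw [← hM] at h2
          exact absurd h2 (not_le.2 hsM)
        · exact pos_iff_ne_zero.2 h0
      exact key_lemma hd f hf hmid hs0 hpos
  refine ⟨hpart1, ?_⟩
  have h3 : ∀ᵐ x, ∀ n : ℕ, 0 < f x → ENNReal.ofReal (1 - 1/((n:ℝ)+1)) * M ≤ f x := by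
    rw [ae_all_iff]
    intro n
    have hz := hpart1 (1/((n:ℝ)+1)) (by positivity)
    rw [ae_iff]
    refine measure_mono_null ?_ hz
    intro y hy
    simp only [Set.mem_setOf_eq, Classical.not_imp] at hy
    exact ⟨hy.1, hy.2⟩
  filter_upwards [h3, ae_le_essSup (f := f) (μ := (volume : Measure (Fin d → ℝ)))]
    with x hx hxle
  rcases eq_or_ne (f x) 0 with h0 | h0
  · have hx_not : x ∉ {x | 0 < f x} := by simp [h0]
    rw [Set.indicator_of_notMem hx_not]
    exact h0
  · have hxS : x ∈ {x | 0 < f x} := pos_iff_ne_zero.2 h0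
    rw [Set.indicator_of_mem hxS]
    refine le_antisymm hxle ?_
    have htend : Tendsto (fun n : ℕ => ENNReal.ofReal (1 - 1/((n:ℝ)+1)) * M)
        atTop (𝓝 (1 * M)) := by
      refine ENNReal.Tendsto.mul_const ?_ (Or.inl one_ne_zero)
      have h4 : Tendsto (fun n : ℕ => 1 - 1/((n:ℝ)+1)) atTop (𝓝 1) := by
        have h5 := tendsto_one_div_add_atTop_nhds_zero_nat (𝕜 := ℝ)
        simpa using (tendsto_const_nhds (x := (1:ℝ)) (f := atTop)).sub h5
      simpa using ENNReal.tendsto_ofReal h4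
    rw [one_mul] at htend
    exact le_of_tendsto htend (Eventually.of_forall fun n => hx n hxS)
end

section
/- Let G be a compact connected group with Haar probability measure μ and let A, B ⊆ G be nonempty measurable sets with AB measurable. Then μ(AB) ≥ min(1, μ(A) + μ(B)) (Kemperman's inequality). -/
set_option linter.unusedSectionVars false
set_option linter.unusedVariables false
set_option linter.unusedTactic false
set_option maxHeartbeats 1000000

open MeasureTheory Pointwise Set Filter Topology

namespace KempAux


variable {G : Type*} [Group G] [TopologicalSpace G] [IsTopologicalGroup G]
    [CompactSpace G] [MeasurableSpace G] [BorelSpace G]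

def Rt (X : Set G) (g : G) : Set G := (fun x => x * g⁻¹) ⁻¹' X
def Lt (Y : Set G) (g : G) : Set G := (fun y => g⁻¹ * y) ⁻¹' Y

lemma mem_Rt {X : Set G} {g x : G} : x ∈ Rt X g ↔ x * g⁻¹ ∈ X := Iff.rfl
lemma mem_Lt {Y : Set G} {g y : G} : y ∈ Lt Y g ↔ g⁻¹ * y ∈ Y := Iff.rfl

lemma Rt_comp (X : Set G) (h g : G) : Rt (Rt X h) g = Rt X (h * g) := by
  ext x; simp [mem_Rt, mul_inv_rev, mul_assoc]
lemma Lt_comp (Y : Set G) (h g : G) : Lt (Lt Y h) g = Lt Y (g * h) := by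
  ext y; simp [mem_Lt, mul_inv_rev, mul_assoc]
@[simp] lemma Rt_one (X : Set G) : Rt X 1 = X := by ext x; simp [mem_Rt]
@[simp] lemma Lt_one (Y : Set G) : Lt Y 1 = Y := by ext y; simp [mem_Lt]
lemma Rt_diff (X X' : Set G) (g : G) : Rt (X \ X') g = Rt X g \ Rt X' g := rfl
lemma Rt_inter (X X' : Set G) (g : G) : Rt (X ∩ X') g = Rt X g ∩ Rt X' g := rfl
lemma Lt_diff (Y Y' : Set G) (g : G) : Lt (Y \ Y') g = Lt Y g \ Lt Y' g := rfl
lemma Lt_inter (Y Y' : Set G) (g : G) : Lt (Y ∩ Y') g = Lt Y g ∩ Lt Y' g := rfl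
lemma isClosed_Rt {X : Set G} (hX : IsClosed X) (g : G) : IsClosed (Rt X g) :=
  hX.preimage (continuous_mul_right g⁻¹)
lemma isClosed_Lt {Y : Set G} (hY : IsClosed Y) (g : G) : IsClosed (Lt Y g) :=
  hY.preimage (continuous_mul_left g⁻¹)
lemma measurableSet_Rt {X : Set G} (hX : MeasurableSet X) (g : G) : MeasurableSet (Rt X g) :=
  hX.preimage (measurable_mul_const g⁻¹)
lemma measurableSet_Lt {Y : Set G} (hY : MeasurableSet Y) (g : G) : MeasurableSet (Lt Y g) :=
  hY.preimage (measurable_const_mul g⁻¹)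
lemma nonempty_Rt {X : Set G} (hX : X.Nonempty) (g : G) : (Rt X g).Nonempty := by
  obtain ⟨x, hx⟩ := hX; exact ⟨x * g, by simp [mem_Rt, hx]⟩
lemma nonempty_Lt {Y : Set G} (hY : Y.Nonempty) (g : G) : (Lt Y g).Nonempty := by
  obtain ⟨y, hy⟩ := hY; exact ⟨g * y, by simp [mem_Lt, hy]⟩


theorem kem_rightInv (μ : Measure G) [μ.IsHaarMeasure] [IsProbabilityMeasure μ] :
    μ.IsMulRightInvariant := by
  constructor
  intro g
  have h1 : IsProbabilityMeasure (Measure.map (· * g) μ) :=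
    Measure.isProbabilityMeasure_map (measurable_mul_const g).aemeasurable
  exact Measure.isHaarMeasure_eq_of_isProbabilityMeasure (Measure.map (· * g) μ) μ

theorem kem_invInv (μ : Measure G) [μ.IsHaarMeasure] [IsProbabilityMeasure μ] :
    μ.IsInvInvariant := by
  haveI := kem_rightInv μ
  constructor
  haveI h1 : IsProbabilityMeasure μ.inv := by
    constructor; rw [Measure.inv_apply]; simp
  haveI : μ.inv.IsHaarMeasure :=
    { lt_top_of_isCompact := fun K _hK => by
        rw [Measure.inv_apply]; exact measure_lt_top μ _
      open_pos := fun U hU hUne => by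
        rw [Measure.inv_apply]
        exact (hU.inv.measure_pos μ (by simpa using hUne)).ne' }
  exact Measure.isHaarMeasure_eq_of_isProbabilityMeasure μ.inv μ

variable (μ : Measure G) [IsProbabilityMeasure μ]
  [μ.IsMulLeftInvariant] [μ.IsMulRightInvariant]

lemma mu_Rt (X : Set G) (g : G) : μ (Rt X g) = μ X :=
  measure_preimage_mul_right μ g⁻¹ X
lemma mu_Lt (Y : Set G) (g : G) : μ (Lt Y g) = μ Y :=
  measure_preimage_mul μ g⁻¹ Y

noncomputable def m (S : Set G) : ℝ := (μ S).toReal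

lemma m_nonneg (S : Set G) : 0 ≤ m μ S := ENNReal.toReal_nonneg
lemma m_mono {S T : Set G} (h : S ⊆ T) : m μ S ≤ m μ T :=
  ENNReal.toReal_mono (measure_ne_top μ T) (measure_mono h)
@[simp] lemma m_univ : m μ (univ : Set G) = 1 := by simp [m]
@[simp] lemma m_empty : m μ (∅ : Set G) = 0 := by simp [m]
lemma m_le_one (S : Set G) : m μ S ≤ 1 := by simpa using m_mono μ (subset_univ S)
lemma m_Rt (X : Set G) (g : G) : m μ (Rt X g) = m μ X := by simp [m, mu_Rt]
lemma m_Lt (Y : Set G) (g : G) : m μ (Lt Y g) = m μ Y := by simp [m, mu_Lt]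
lemma m_union_disjoint {S T : Set G} (hd : Disjoint S T) (hT : MeasurableSet T) :
    m μ (S ∪ T) = m μ S + m μ T := by
  rw [m, measure_union hd hT, ENNReal.toReal_add (measure_ne_top μ S) (measure_ne_top μ T)]; rfl
lemma m_diff_add_inter {S T : Set G} (hT : MeasurableSet T) :
    m μ (S \ T) + m μ (S ∩ T) = m μ S := by
  rw [m, m, m, ← ENNReal.toReal_add (measure_ne_top μ _) (measure_ne_top μ _),
    measure_diff_add_inter S hT]
lemma m_diff_eq {S T : Set G} (hT : MeasurableSet T) :
    m μ (S \ T) = m μ S - m μ (S ∩ T) := by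
  have := m_diff_add_inter μ (S := S) hT; linarith
lemma m_union_add_inter {S T : Set G} (hT : MeasurableSet T) :
    m μ (S ∪ T) + m μ (S ∩ T) = m μ S + m μ T := by
  rw [m, m, m, m, ← ENNReal.toReal_add (measure_ne_top μ _) (measure_ne_top μ _),
    ← ENNReal.toReal_add (measure_ne_top μ _) (measure_ne_top μ _),
    measure_union_add_inter S hT]
lemma m_union_subadd (S T : Set G) : m μ (S ∪ T) ≤ m μ S + m μ T := by
  rw [m, m, m, ← ENNReal.toReal_add (measure_ne_top μ _) (measure_ne_top μ _)]
  exact ENNReal.toReal_mono (by finiteness) (measure_union_le S T)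
lemma m_pos_iff {S : Set G} : 0 < m μ S ↔ 0 < μ S := by
  rw [m, ENNReal.toReal_pos_iff]
  exact ⟨fun h => h.1, fun h => ⟨h, measure_lt_top μ S⟩⟩
lemma nonempty_of_m_pos {S : Set G} (h : 0 < m μ S) : S.Nonempty := by
  rw [nonempty_iff_ne_empty]; rintro rfl; simp at h
lemma m_zero_iff {S : Set G} : m μ S = 0 ↔ μ S = 0 := by
  rw [m, ENNReal.toReal_eq_zero_iff]; simp [(measure_lt_top μ S).ne]

/-! ### the functions α and β -/

noncomputable def al (X : Set G) (g : G) : ℝ := m μ (X \ Rt X g)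
noncomputable def be (Y : Set G) (g : G) : ℝ := m μ (Lt Y g \ Y)

lemma al_eq {X : Set G} (hX : MeasurableSet X) (g : G) :
    al μ X g = m μ X - m μ (X ∩ Rt X g) := m_diff_eq μ (measurableSet_Rt hX g)
lemma be_eq {Y : Set G} (hY : MeasurableSet Y) (g : G) :
    be μ Y g = m μ Y - m μ (Lt Y g ∩ Y) := by
  rw [be, m_diff_eq μ hY, m_Lt]
lemma al_nonneg (X : Set G) (g : G) : 0 ≤ al μ X g := m_nonneg μ _
lemma be_nonneg (Y : Set G) (g : G) : 0 ≤ be μ Y g := m_nonneg μ _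
@[simp] lemma al_one (X : Set G) : al μ X 1 = 0 := by simp [al]
@[simp] lemma be_one (Y : Set G) : be μ Y 1 = 0 := by simp [be]

lemma m_inter_Rt_inv {X : Set G} (g : G) :
    m μ (X ∩ Rt X g⁻¹) = m μ (X ∩ Rt X g) := by
  have : Rt (X ∩ Rt X g⁻¹) g = Rt X g ∩ X := by
    rw [Rt_inter, Rt_comp, inv_mul_cancel, Rt_one]
  calc m μ (X ∩ Rt X g⁻¹) = m μ (Rt (X ∩ Rt X g⁻¹) g) := (m_Rt μ _ g).symm
    _ = m μ (Rt X g ∩ X) := by rw [this]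
    _ = m μ (X ∩ Rt X g) := by rw [inter_comm]

lemma m_inter_Lt_inv {Y : Set G} (g : G) :
    m μ (Lt Y g⁻¹ ∩ Y) = m μ (Lt Y g ∩ Y) := by
  have : Lt (Lt Y g⁻¹ ∩ Y) g = Y ∩ Lt Y g := by
    rw [Lt_inter, Lt_comp, mul_inv_cancel, Lt_one]
  calc m μ (Lt Y g⁻¹ ∩ Y) = m μ (Lt (Lt Y g⁻¹ ∩ Y) g) := (m_Lt μ _ g).symm
    _ = m μ (Y ∩ Lt Y g) := by rw [this]
    _ = m μ (Lt Y g ∩ Y) := by rw [inter_comm]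

lemma al_inv {X : Set G} (hX : MeasurableSet X) (g : G) : al μ X g⁻¹ = al μ X g := by
  rw [al_eq μ hX, al_eq μ hX, m_inter_Rt_inv]
lemma be_inv {Y : Set G} (hY : MeasurableSet Y) (g : G) : be μ Y g⁻¹ = be μ Y g := by
  rw [be_eq μ hY, be_eq μ hY, m_inter_Lt_inv]

/-- the key translation-difference smallness near 1 -/
lemma small_translate_right {X : Set G} (hX : IsClosed X) {ε : ℝ} (hε : 0 < ε) :
    ∃ W ∈ 𝓝 (1 : G), ∀ h ∈ W, al μ X h < ε := by
  have hXm := hX.measurableSet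
  obtain ⟨U, hXU, hUo, hUlt⟩ := Set.exists_isOpen_lt_add X (measure_ne_top μ X)
    (ENNReal.ofReal_pos.2 hε).ne'
  obtain ⟨V, hV, hXV⟩ := compact_open_separated_mul_right hX.isCompact hUo hXU
  refine ⟨V ∩ V⁻¹, Filter.inter_mem hV (by simpa using inv_mem_nhds_one G hV), ?_⟩
  intro h hh
  have key : ∀ k ∈ V, m μ (Rt X k \ X) < ε := by
    intro k hk
    have h1 : Rt X k ⊆ U := by
      intro x hx
      have : (x * k⁻¹) * k ∈ X * V := Set.mul_mem_mul hx hk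
      simpa using hXV this
    have h2 : m μ (Rt X k \ X) ≤ m μ (U \ X) := m_mono μ (diff_subset_diff_left h1)
    have h3 : m μ (U \ X) = m μ U - m μ X := by
      rw [m_diff_eq μ hXm, inter_eq_self_of_subset_right hXU]
    have h4 : m μ U < m μ X + ε := by
      rw [m, m]
      have := ENNReal.toReal_strict_mono (by finiteness) hUlt
      rwa [ENNReal.toReal_add (measure_ne_top μ X) (by simp), ENNReal.toReal_ofReal hε.le]
        at this
    linarith
  have hid : X \ Rt X h⁻¹ = Rt (Rt X h \ X) h⁻¹ := by
    rw [Rt_diff, Rt_comp, mul_inv_cancel, Rt_one]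
  rw [← al_inv μ hXm, al, hid, m_Rt]
  exact key h hh.1

lemma small_translate_left {Y : Set G} (hY : IsClosed Y) {ε : ℝ} (hε : 0 < ε) :
    ∃ W ∈ 𝓝 (1 : G), ∀ h ∈ W, be μ Y h < ε := by
  have hYm := hY.measurableSet
  obtain ⟨U, hYU, hUo, hUlt⟩ := Set.exists_isOpen_lt_add Y (measure_ne_top μ Y)
    (ENNReal.ofReal_pos.2 hε).ne'
  obtain ⟨V, hV, hYV⟩ := compact_open_separated_mul_left hY.isCompact hUo hYU
  refine ⟨V, hV, ?_⟩
  intro h hh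
  have h1 : Lt Y h ⊆ U := by
    intro y hy
    have : h * (h⁻¹ * y) ∈ V * Y := Set.mul_mem_mul hh hy
    simpa [mul_assoc] using hYV this
  have h2 : m μ (Lt Y h \ Y) ≤ m μ (U \ Y) := m_mono μ (diff_subset_diff_left h1)
  have h3 : m μ (U \ Y) = m μ U - m μ Y := by
    rw [m_diff_eq μ hYm, inter_eq_self_of_subset_right hYU]
  have h4 : m μ U < m μ Y + ε := by
    rw [m, m]
    have := ENNReal.toReal_strict_mono (by finiteness) hUlt
    rwa [ENNReal.toReal_add (measure_ne_top μ Y) (by simp), ENNReal.toReal_ofReal hε.le]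
      at this
  rw [be]; linarith

lemma continuous_al {X : Set G} (hX : IsClosed X) : Continuous (al μ X) := by
  have hXm := hX.measurableSet
  rw [continuous_iff_continuousAt]
  intro g
  rw [ContinuousAt, Metric.tendsto_nhds]
  intro ε hε
  obtain ⟨W, hW, hWs⟩ := small_translate_right μ hX (half_pos hε)
  have hmap : Continuous fun g' : G => g * g'⁻¹ := by continuity
  have hnb : (fun g' : G => g * g'⁻¹) ⁻¹' W ∈ 𝓝 g := by
    apply hmap.continuousAt.preimage_mem_nhds
    simpa using hW
  filter_upwards [hnb] with g' hg'
  -- |al X g' - al X g| ≤ al X (g * g'⁻¹) + al X (g * g'⁻¹)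
  have key : ∀ a b : G, m μ (X ∩ Rt X a) ≤ m μ (X ∩ Rt X b) + al μ X (b * a⁻¹) := by
    intro a b
    have hsub : X ∩ Rt X a ⊆ (X ∩ Rt X b) ∪ (Rt X a \ Rt X b) := by
      intro x ⟨hx1, hx2⟩
      by_cases h : x ∈ Rt X b
      · exact Or.inl ⟨hx1, h⟩
      · exact Or.inr ⟨hx2, h⟩
    have h1 : m μ (X ∩ Rt X a) ≤ m μ ((X ∩ Rt X b) ∪ (Rt X a \ Rt X b)) := m_mono μ hsub
    have h2 : m μ ((X ∩ Rt X b) ∪ (Rt X a \ Rt X b)) ≤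
        m μ (X ∩ Rt X b) + m μ (Rt X a \ Rt X b) := m_union_subadd μ _ _
    have h3 : Rt X a \ Rt X b = Rt (X \ Rt X (b * a⁻¹)) a := by
      rw [Rt_diff, Rt_comp, mul_assoc, inv_mul_cancel, mul_one]
    have h4 : m μ (Rt X a \ Rt X b) = al μ X (b * a⁻¹) := by
      rw [h3, m_Rt]; rfl
    linarith
  have k1 := key g' g
  have k2 := key g g'
  have e1 : al μ X (g' * g⁻¹) = al μ X (g * g'⁻¹) := by
    rw [show g' * g⁻¹ = (g * g'⁻¹)⁻¹ by group, al_inv μ hXm]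
  have hsmall := hWs _ hg'
  rw [e1] at k2
  rw [Real.dist_eq, al_eq μ hXm, al_eq μ hXm, abs_sub_lt_iff]
  constructor <;> linarith

lemma continuous_be {Y : Set G} (hY : IsClosed Y) : Continuous (be μ Y) := by
  have hYm := hY.measurableSet
  rw [continuous_iff_continuousAt]
  intro g
  rw [ContinuousAt, Metric.tendsto_nhds]
  intro ε hε
  obtain ⟨W, hW, hWs⟩ := small_translate_left μ hY (half_pos hε)
  have hmap : Continuous fun g' : G => g⁻¹ * g' := by continuity
  have hnb : (fun g' : G => g⁻¹ * g') ⁻¹' W ∈ 𝓝 g := by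
    apply hmap.continuousAt.preimage_mem_nhds
    simpa using hW
  filter_upwards [hnb] with g' hg'
  have key : ∀ a b : G, m μ (Lt Y a ∩ Y) ≤ m μ (Lt Y b ∩ Y) + be μ Y (b⁻¹ * a) := by
    intro a b
    have hsub : Lt Y a ∩ Y ⊆ (Lt Y b ∩ Y) ∪ (Lt Y a \ Lt Y b) := by
      intro y ⟨hy1, hy2⟩
      by_cases h : y ∈ Lt Y b
      · exact Or.inl ⟨h, hy2⟩
      · exact Or.inr ⟨hy1, h⟩
    have h1 := m_mono μ hsub
    have h2 := m_union_subadd μ (Lt Y b ∩ Y) (Lt Y a \ Lt Y b)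
    have h3 : Lt Y a \ Lt Y b = Lt (Lt Y (b⁻¹ * a) \ Y) b := by
      rw [Lt_diff, Lt_comp, mul_inv_cancel_left]
    have h4 : m μ (Lt Y a \ Lt Y b) = be μ Y (b⁻¹ * a) := by
      rw [h3, m_Lt]; rfl
    linarith
  have k1 := key g' g
  have k2 := key g g'
  have e1 : be μ Y (g'⁻¹ * g) = be μ Y (g⁻¹ * g') := by
    rw [show g'⁻¹ * g = (g⁻¹ * g')⁻¹ by group, be_inv μ hYm]
  have hsmall := hWs _ hg'
  rw [e1] at k2
  rw [Real.dist_eq, be_eq μ hYm, be_eq μ hYm, abs_sub_lt_iff]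
  constructor <;> linarith

/-! ### feasible pairs and attainment -/

def Feas (P X Y : Set G) : Prop :=
  IsClosed X ∧ X.Nonempty ∧ IsClosed Y ∧ Y.Nonempty ∧ X * Y ⊆ P

noncomputable def sig (X Y : Set G) : ℝ := m μ X + m μ Y

lemma attain {P : Set G} (hP : IsClosed P)
    (Xs Ys : ℕ → Set G) (hfeas : ∀ n, Feas P (Xs n) (Ys n))
    {a b : ℝ} (ha : Tendsto (fun n => m μ (Xs n)) atTop (𝓝 a))
    (hb : Tendsto (fun n => m μ (Ys n)) atTop (𝓝 b)) :
    ∃ X Y, Feas P X Y ∧ a ≤ m μ X ∧ b ≤ m μ Y := by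
  classical
  set 𝒰 : Ultrafilter ℕ := Filter.hyperfilter ℕ with h𝒰
  -- the limit construction for a sequence of closed nonempty sets
  have main : ∀ (Zs : ℕ → Set G), (∀ n, IsClosed (Zs n)) → (∀ n, (Zs n).Nonempty) →
      ∀ c : ℝ, Tendsto (fun n => m μ (Zs n)) atTop (𝓝 c) →
      ∃ Z : Set G, IsClosed Z ∧ Z.Nonempty ∧ c ≤ m μ Z ∧
        (∀ V : Set G, IsOpen V → ∀ z ∈ Z, z ∈ V → {i | (Zs i ∩ V).Nonempty} ∈ 𝒰) := by
    intro Zs hcl hne c hc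
    set C : {U : Set ℕ // U ∈ 𝒰} → Set G := fun U => closure (⋃ i ∈ U.1, Zs i) with hC
    haveI : Nonempty {U : Set ℕ // U ∈ 𝒰} := ⟨⟨Set.univ, Filter.univ_mem⟩⟩
    have hCcl : ∀ U, IsClosed (C U) := fun U => isClosed_closure
    have hCcp : ∀ U, IsCompact (C U) := fun U => (hCcl U).isCompact
    have hCne : ∀ U, (C U).Nonempty := by
      rintro ⟨U, hU⟩
      obtain ⟨i, hi⟩ := Filter.nonempty_of_mem hU
      obtain ⟨z, hz⟩ := hne i
      exact ⟨z, subset_closure (mem_biUnion hi hz)⟩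
    have hdir : Directed (· ⊇ ·) C := by
      rintro ⟨U, hU⟩ ⟨V, hV⟩
      refine ⟨⟨U ∩ V, Filter.inter_mem hU hV⟩, ?_, ?_⟩
      · exact closure_mono (iUnion₂_mono' fun i hi => ⟨i, hi.1, subset_rfl⟩)
      · exact closure_mono (iUnion₂_mono' fun i hi => ⟨i, hi.2, subset_rfl⟩)
    set Z := ⋂ U, C U with hZ
    have hZcl : IsClosed Z := isClosed_iInter hCcl
    have hZne : Z.Nonempty :=
      IsCompact.nonempty_iInter_of_directed_nonempty_isCompact_isClosed C hdir hCne hCcp hCcl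
    -- measure lower bound on each member
    have hCmeas : ∀ U, c ≤ m μ (C U) := by
      rintro ⟨U, hU⟩
      have hUinf : U.Infinite := by
        by_contra hfin
        rw [Set.not_infinite] at hfin
        exact Set.Finite.notMem_hyperfilter hfin hU
      by_contra hlt
      push_neg at hlt
      set ε := c - m μ (C ⟨U, hU⟩) with hε
      have hεpos : 0 < ε := by linarith
      obtain ⟨N, hN⟩ := (Metric.tendsto_atTop.1 hc) ε hεpos
      obtain ⟨i, hiU, hiN⟩ := hUinf.exists_gt N
      have h1 : m μ (Zs i) ≤ m μ (C ⟨U, hU⟩) :=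
        m_mono μ ((subset_biUnion_of_mem hiU).trans subset_closure)
      have h2 := hN i hiN.le
      rw [Real.dist_eq, abs_sub_lt_iff] at h2
      linarith [h2.2]
    -- measure of the intersection
    have hZm : c ≤ m μ Z := by
      rcases le_or_gt c 0 with h | h
      · exact h.trans (m_nonneg μ Z)
      have hle : ENNReal.ofReal c ≤ μ Z := by
        rw [Set.measure_eq_iInf_isOpen]
        refine le_iInf fun O => le_iInf fun hZO => le_iInf fun hO => ?_
        -- some member is inside O
        have : ∃ U, C U ⊆ O := by
          by_contra hnot
          push_neg at hnot
          have hne' : ∀ U, (C U ∩ Oᶜ).Nonempty := by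
            intro U
            rcases Set.not_subset.1 (hnot U) with ⟨z, hz1, hz2⟩
            exact ⟨z, hz1, hz2⟩
          have hdir' : Directed (· ⊇ ·) (fun U => C U ∩ Oᶜ) := by
            intro U V
            obtain ⟨W, hWU, hWV⟩ := hdir U V
            exact ⟨W, inter_subset_inter_left _ hWU, inter_subset_inter_left _ hWV⟩
          have := IsCompact.nonempty_iInter_of_directed_nonempty_isCompact_isClosed
            (fun U => C U ∩ Oᶜ) hdir' hne'
            (fun U => ((hCcl U).inter (isClosed_compl_iff.2 hO)).isCompact)
            (fun U => (hCcl U).inter (isClosed_compl_iff.2 hO))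
          obtain ⟨z, hz⟩ := this
          have hz1 : ∀ U, z ∈ C U ∧ z ∉ O := fun U => mem_iInter.1 hz U
          exact (hz1 (Classical.arbitrary _)).2 (hZO (mem_iInter.2 fun U => (hz1 U).1))
        obtain ⟨U, hU⟩ := this
        calc ENNReal.ofReal c ≤ μ (C U) := by
              have := hCmeas U
              rw [m] at this
              exact (ENNReal.ofReal_le_of_le_toReal this)
          _ ≤ μ O := measure_mono hU
      have := ENNReal.toReal_mono (measure_ne_top μ Z) hle
      rwa [ENNReal.toReal_ofReal h.le] at this
    -- the approximation property
    refine ⟨Z, hZcl, hZne, hZm, ?_⟩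
    intro V hV z hzZ hzV
    by_contra hnot
    have hcompl : {i | (Zs i ∩ V).Nonempty}ᶜ ∈ 𝒰 := Ultrafilter.compl_mem_iff_notMem.2 hnot
    have hzC : z ∈ C ⟨_, hcompl⟩ := mem_iInter.1 hzZ _
    rw [hC, mem_closure_iff] at hzC
    obtain ⟨w, hw1, hw2⟩ := hzC V hV hzV
    obtain ⟨i, hi, hwi⟩ := mem_iUnion₂.1 hw2
    exact hi ⟨w, hwi, hw1⟩
  -- apply to both sequences
  obtain ⟨X, hXcl, hXne, hXm, hXap⟩ := main Xs (fun n => (hfeas n).1) (fun n => (hfeas n).2.1) a ha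
  obtain ⟨Y, hYcl, hYne, hYm, hYap⟩ :=
    main Ys (fun n => (hfeas n).2.2.1) (fun n => (hfeas n).2.2.2.1) b hb
  refine ⟨X, Y, ⟨hXcl, hXne, hYcl, hYne, ?_⟩, hXm, hYm⟩
  rintro p ⟨x, hx, y, hy, rfl⟩
  by_contra hxy
  have hPc : IsOpen Pᶜ := hP.isOpen_compl
  have hmem : (x, y) ∈ (fun q : G × G => q.1 * q.2) ⁻¹' Pᶜ := hxy
  have hopen : IsOpen ((fun q : G × G => q.1 * q.2) ⁻¹' Pᶜ) := hPc.preimage continuous_mul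
  obtain ⟨V, W, hVo, hxV, hWo, hyW, hVW⟩ := mem_nhds_prod_iff'.1 (hopen.mem_nhds hmem)
  have hUX := hXap V hVo x hx hxV
  have hUY := hYap W hWo y hy hyW
  obtain ⟨i, hiX, hiY⟩ := Filter.nonempty_of_mem (Filter.inter_mem hUX hUY)
  obtain ⟨xi, hxi1, hxi2⟩ := hiX
  obtain ⟨yi, hyi1, hyi2⟩ := hiY
  have : xi * yi ∈ P := (hfeas i).2.2.2.2 (Set.mul_mem_mul hxi1 hyi1)
  exact hVW (Set.mk_mem_prod hxi2 hyi2) this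

variable [μ.IsInvInvariant]

lemma XY_univ_of_one_lt {P X Y : Set G} (hf : Feas P X Y) (h1 : 1 < sig μ X Y) :
    X * Y = univ := by
  obtain ⟨hXc, hXne, hYc, hYne, hsub⟩ := hf
  ext g
  simp only [mem_univ, iff_true]
  set Z : Set G := (fun z => g / z) ⁻¹' X with hZ
  have hZm : MeasurableSet Z := hXc.measurableSet.preimage (measurable_id.const_div g)
  have hZmu : μ Z = μ X :=
    (Measure.measurePreserving_div_left μ g).measure_preimage hXc.measurableSet.nullMeasurableSet
  have hmZ : m μ Z = m μ X := by rw [m, m, hZmu]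
  have h2 : m μ (Z ∪ Y) + m μ (Z ∩ Y) = m μ Z + m μ Y := m_union_add_inter μ hYc.measurableSet
  have h3 : m μ (Z ∪ Y) ≤ 1 := m_le_one μ _
  have h4 : 0 < m μ (Z ∩ Y) := by
    have : m μ Z + m μ Y = sig μ X Y := by rw [hmZ]; rfl
    linarith
  obtain ⟨y, hyZ, hyY⟩ := nonempty_of_m_pos μ h4
  have : g / y ∈ X := hyZ
  have : (g / y) * y ∈ X * Y := Set.mul_mem_mul this hyY
  simpa [div_mul_cancel] using this

lemma sig_le_one {P X Y : Set G} (hPlt : m μ P < 1) (hf : Feas P X Y) : sig μ X Y ≤ 1 := by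
  by_contra h
  push_neg at h
  have := XY_univ_of_one_lt μ hf h
  have h2 : m μ P ≥ 1 := by
    have := m_mono μ (this ▸ hf.2.2.2.2 : univ ⊆ P)
    simpa using this
  linarith

lemma DY_symm {Y : Set G} {g : G} (h : (Y ∩ Lt Y g).Nonempty) :
    (Y ∩ Lt Y g⁻¹).Nonempty := by
  obtain ⟨y, hy1, hy2⟩ := h
  exact ⟨g⁻¹ * y, hy2, by simpa [mem_Lt] using hy1⟩

lemma step1 {P X Y : Set G} (hf : Feas P X Y) (g : G) (hne : (Y ∩ Lt Y g⁻¹).Nonempty) :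
    Feas P (X ∪ Rt X g) (Y ∩ Lt Y g⁻¹) ∧
    m μ (X ∪ Rt X g) = m μ X + al μ X g ∧
    m μ (Y ∩ Lt Y g⁻¹) = m μ Y - be μ Y g := by
  obtain ⟨hXc, hXne, hYc, hYne, hsub⟩ := hf
  have hXm := hXc.measurableSet
  have hYm := hYc.measurableSet
  refine ⟨⟨hXc.union (isClosed_Rt hXc g), hXne.mono subset_union_left,
      hYc.inter (isClosed_Lt hYc g⁻¹), hne, ?_⟩, ?_, ?_⟩
  · rintro p ⟨x, hx, y, hy, rfl⟩
    rcases hx with hx | hx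
    · exact hsub (Set.mul_mem_mul hx hy.1)
    · have hx' : x * g⁻¹ ∈ X := hx
      have hy' : g * y ∈ Y := by simpa [mem_Lt] using hy.2
      have : (x * g⁻¹) * (g * y) ∈ X * Y := Set.mul_mem_mul hx' hy'
      have he : (x * g⁻¹) * (g * y) = x * y := by group
      rw [he] at this
      exact hsub this
  · have hdecomp : X ∪ Rt X g = X ∪ (Rt X g \ X) := by simp
    have hdisj : Disjoint X (Rt X g \ X) := disjoint_sdiff_self_right
    have hid : Rt X g \ X = Rt (X \ Rt X g⁻¹) g := by
      rw [Rt_diff, Rt_comp, inv_mul_cancel, Rt_one]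
    rw [hdecomp, m_union_disjoint μ hdisj ((measurableSet_Rt hXm g).diff hXm), hid, m_Rt,
      ← al, al_inv μ hXm]
  · have hid : Y \ Lt Y g⁻¹ = Lt (Lt Y g \ Y) g⁻¹ := by
      rw [Lt_diff, Lt_comp, inv_mul_cancel, Lt_one]
    have h1 : m μ (Y \ Lt Y g⁻¹) = be μ Y g := by rw [hid, m_Lt]; rfl
    have := m_diff_add_inter μ (S := Y) (measurableSet_Lt hYm g⁻¹)
    linarith

lemma step2 {P X Y : Set G} (hf : Feas P X Y) (g : G) (hne : (X ∩ Rt X g).Nonempty) :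
    Feas P (X ∩ Rt X g) (Y ∪ Lt Y g⁻¹) ∧
    m μ (X ∩ Rt X g) = m μ X - al μ X g ∧
    m μ (Y ∪ Lt Y g⁻¹) = m μ Y + be μ Y g := by
  obtain ⟨hXc, hXne, hYc, hYne, hsub⟩ := hf
  have hXm := hXc.measurableSet
  have hYm := hYc.measurableSet
  refine ⟨⟨hXc.inter (isClosed_Rt hXc g), hne,
      hYc.union (isClosed_Lt hYc g⁻¹), hYne.mono subset_union_left, ?_⟩, ?_, ?_⟩
  · rintro p ⟨x, hx, y, hy, rfl⟩
    rcases hy with hy | hy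
    · exact hsub (Set.mul_mem_mul hx.1 hy)
    · have hx' : x * g⁻¹ ∈ X := hx.2
      have hy' : g * y ∈ Y := by simpa [mem_Lt] using hy
      have : (x * g⁻¹) * (g * y) ∈ X * Y := Set.mul_mem_mul hx' hy'
      have he : (x * g⁻¹) * (g * y) = x * y := by group
      rw [he] at this
      exact hsub this
  · have := m_diff_add_inter μ (S := X) (measurableSet_Rt hXm g)
    rw [← al] at this
    linarith
  · have hdecomp : Y ∪ Lt Y g⁻¹ = Y ∪ (Lt Y g⁻¹ \ Y) := by simp
    have hdisj : Disjoint Y (Lt Y g⁻¹ \ Y) := disjoint_sdiff_self_right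
    rw [hdecomp, m_union_disjoint μ hdisj ((measurableSet_Lt hYm g⁻¹).diff hYm),
      ← be, be_inv μ hYm]

section MaxStruct
variable [ConnectedSpace G]

lemma max_struct {P X Y : Set G} {sstar d : ℝ}
    (hf : Feas P X Y) (hsig : sig μ X Y = sstar)
    (hub : ∀ X' Y', Feas P X' Y' → sig μ X' Y' ≤ sstar)
    (hd : sstar = m μ P + d) (hdpos : 0 < d) :
    (∀ g, al μ X g = be μ Y g) ∧ (∀ g, al μ X g ≤ m μ Y - d) ∧
    (∀ g, be μ Y g ≤ m μ X - d) ∧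
    (∀ g, (Y ∩ Lt Y g).Nonempty) ∧ (∀ g, (X ∩ Rt X g).Nonempty) := by
  obtain ⟨hXc, hXne, hYc, hYne, hsub⟩ := hf
  have hf' : Feas P X Y := ⟨hXc, hXne, hYc, hYne, hsub⟩
  have hXm := hXc.measurableSet
  have hYm := hYc.measurableSet
  -- basic bounds
  have hRtP : ∀ y ∈ Y, Rt X y ⊆ P := by
    intro y hy z hz
    have : (z * y⁻¹) * y ∈ X * Y := Set.mul_mem_mul hz hy
    simpa using hsub this
  have hLtP : ∀ x ∈ X, Lt Y x ⊆ P := by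
    intro x hx z hz
    have : x * (x⁻¹ * z) ∈ X * Y := Set.mul_mem_mul hx hz
    simpa [mul_assoc] using hsub this
  have hmXP : m μ X ≤ m μ P := by
    obtain ⟨y, hy⟩ := hYne
    calc m μ X = m μ (Rt X y) := (m_Rt μ X y).symm
      _ ≤ m μ P := m_mono μ (hRtP y hy)
  have hmYP : m μ Y ≤ m μ P := by
    obtain ⟨x, hx⟩ := hXne
    calc m μ Y = m μ (Lt Y x) := (m_Lt μ Y x).symm
      _ ≤ m μ P := m_mono μ (hLtP x hx)
  have hsigXY : m μ X + m μ Y = sstar := hsig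
  have hdX : d ≤ m μ X := by linarith
  have hdY : d ≤ m μ Y := by linarith
  -- step consequences
  have tc1 : ∀ g, (Y ∩ Lt Y g).Nonempty → be μ Y g ≤ al μ X g → al μ X g ≤ be μ Y g := by
    intro g hne hba
    obtain ⟨hf1, he1, he2⟩ := step1 μ hf' g (DY_symm hne)
    have := hub _ _ hf1
    simp only [sig] at this
    rw [he1, he2] at this
    linarith
  have tc2 : ∀ g, (X ∩ Rt X g).Nonempty → al μ X g ≤ be μ Y g → be μ Y g ≤ al μ X g := by
    intro g hne hab
    obtain ⟨hf1, he1, he2⟩ := step2 μ hf' g hne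
    have := hub _ _ hf1
    simp only [sig] at this
    rw [he1, he2] at this
    linarith
  -- fact A
  have factA : ∀ g, (Y ∩ Lt Y g).Nonempty → al μ X g ≤ m μ Y - d := by
    rintro g ⟨y, hyY, hyL⟩
    set y₁ := g⁻¹ * y with hy₁
    have hy₁Y : y₁ ∈ Y := hyL
    have hidd : Rt X y₁ \ Rt X y = Rt (X \ Rt X g) y₁ := by
      rw [Rt_diff, Rt_comp]
      congr 2
      rw [hy₁, ← mul_assoc, mul_inv_cancel, one_mul]
    have hdecomp : Rt X y ∪ Rt X y₁ = Rt X y ∪ (Rt X y₁ \ Rt X y) := by simp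
    have hdisj : Disjoint (Rt X y) (Rt X y₁ \ Rt X y) := disjoint_sdiff_self_right
    have hm1 : m μ (Rt X y ∪ Rt X y₁) = m μ X + al μ X g := by
      rw [hdecomp, m_union_disjoint μ hdisj ((measurableSet_Rt hXm y₁).diff
        (measurableSet_Rt hXm y)), m_Rt, hidd, m_Rt]
      rfl
    have hm2 : m μ (Rt X y ∪ Rt X y₁) ≤ m μ P :=
      m_mono μ (union_subset (hRtP y hyY) (hRtP y₁ hy₁Y))
    linarith
  -- fact B
  have factB : ∀ g, (X ∩ Rt X g).Nonempty → be μ Y g ≤ m μ X - d := by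
    rintro g ⟨x, hxX, hxR⟩
    set x₁ := x * g⁻¹ with hx₁
    have hx₁X : x₁ ∈ X := hxR
    have hidd : Lt Y x \ Lt Y x₁ = Lt (Lt Y g \ Y) x₁ := by
      rw [Lt_diff, Lt_comp]
      congr 2
      rw [hx₁, mul_assoc, inv_mul_cancel, mul_one]
    have hdecomp : Lt Y x₁ ∪ Lt Y x = Lt Y x₁ ∪ (Lt Y x \ Lt Y x₁) := by simp
    have hdisj : Disjoint (Lt Y x₁) (Lt Y x \ Lt Y x₁) := disjoint_sdiff_self_right
    have hm1 : m μ (Lt Y x₁ ∪ Lt Y x) = m μ Y + be μ Y g := by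
      rw [hdecomp, m_union_disjoint μ hdisj ((measurableSet_Lt hYm x).diff
        (measurableSet_Lt hYm x₁)), m_Lt, hidd, m_Lt]
      rfl
    have hm2 : m μ (Lt Y x₁ ∪ Lt Y x) ≤ m μ P :=
      m_mono μ (union_subset (hLtP x₁ hx₁X) (hLtP x hxX))
    linarith
  -- degenerate translates
  have notDY : ∀ g, ¬(Y ∩ Lt Y g).Nonempty → be μ Y g = m μ Y := by
    intro g h
    have : Lt Y g ∩ Y = ∅ := by
      rw [not_nonempty_iff_eq_empty] at h
      rw [inter_comm]; exact h
    rw [be_eq μ hYm, this, m_empty]; ring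
  have notDX : ∀ g, ¬(X ∩ Rt X g).Nonempty → al μ X g = m μ X := by
    intro g h
    have : X ∩ Rt X g = ∅ := not_nonempty_iff_eq_empty.1 h
    rw [al_eq μ hXm, this, m_empty]; ring
  have posDY : ∀ g, 0 < m μ (Lt Y g ∩ Y) → (Y ∩ Lt Y g).Nonempty := by
    intro g h
    obtain ⟨y, h1, h2⟩ := nonempty_of_m_pos μ h
    exact ⟨y, h2, h1⟩
  have posDX : ∀ g, 0 < m μ (X ∩ Rt X g) → (X ∩ Rt X g).Nonempty :=
    fun g h => nonempty_of_m_pos μ h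
  -- IVT producers
  have ivtA : ∀ g₀ : G, ∀ v : ℝ, 0 ≤ v → v ≤ al μ X g₀ → ∃ g, al μ X g = v := by
    intro g₀ v hv1 hv2
    have := intermediate_value_univ (a := (1 : G)) (b := g₀) (continuous_al μ hXc)
    have hmem : v ∈ Set.Icc (al μ X 1) (al μ X g₀) := by
      rw [al_one]; exact ⟨hv1, hv2⟩
    exact this hmem
  have ivtB : ∀ g₀ : G, ∀ v : ℝ, 0 ≤ v → v ≤ be μ Y g₀ → ∃ g, be μ Y g = v := by
    intro g₀ v hv1 hv2
    have := intermediate_value_univ (a := (1 : G)) (b := g₀) (continuous_be μ hYc)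
    have hmem : v ∈ Set.Icc (be μ Y 1) (be μ Y g₀) := by
      rw [be_one]; exact ⟨hv1, hv2⟩
    exact this hmem
  -- fullness
  -- if some Y-translate misses Y, extract the key point g₁
  have keyY : (∃ g, ¬(Y ∩ Lt Y g).Nonempty) →
      ∃ g₁, be μ Y g₁ = m μ Y - d/2 ∧ (Y ∩ Lt Y g₁).Nonempty ∧ al μ X g₁ ≤ m μ Y - d := by
    rintro ⟨ga, hga⟩
    have h1 : be μ Y ga = m μ Y := notDY ga hga
    obtain ⟨g₁, hg₁⟩ := ivtB ga (m μ Y - d/2) (by linarith) (by linarith)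
    have h2 : m μ (Lt Y g₁ ∩ Y) = d/2 := by
      have := be_eq μ hYm g₁
      rw [hg₁] at this; linarith
    have h3 : (Y ∩ Lt Y g₁).Nonempty := posDY g₁ (by rw [h2]; linarith)
    exact ⟨g₁, hg₁, h3, factA g₁ h3⟩
  have keyX : (∃ g, ¬(X ∩ Rt X g).Nonempty) →
      ∃ g₂, al μ X g₂ = m μ X - d/2 ∧ (X ∩ Rt X g₂).Nonempty ∧ be μ Y g₂ ≤ m μ X - d := by
    rintro ⟨gb, hgb⟩
    have h1 : al μ X gb = m μ X := notDX gb hgb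
    obtain ⟨g₂, hg₂⟩ := ivtA gb (m μ X - d/2) (by linarith) (by linarith)
    have h2 : m μ (X ∩ Rt X g₂) = d/2 := by
      have := al_eq μ hXm g₂
      rw [hg₂] at this; linarith
    have h3 : (X ∩ Rt X g₂).Nonempty := posDX g₂ (by rw [h2]; linarith)
    exact ⟨g₂, hg₂, h3, factB g₂ h3⟩
  have fullY : ∀ g, (Y ∩ Lt Y g).Nonempty := by
    by_contra hnot
    push_neg at hnot
    obtain ⟨ga, hga⟩ := hnot
    obtain ⟨g₁, hbe₁, hDY₁, hal₁⟩ := keyY ⟨ga, by simp [hga]⟩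
    -- at g₁ : al ≤ mY - d < be = mY - d/2
    by_cases hDX₁ : (X ∩ Rt X g₁).Nonempty
    · have := tc2 g₁ hDX₁ (by linarith)
      linarith
    · -- X not full, al g₁ = m X so m X ≤ m Y - d
      have hX₁ : al μ X g₁ = m μ X := notDX g₁ hDX₁
      have hXY : m μ X ≤ m μ Y - d := by linarith
      obtain ⟨g₂, hal₂, hDX₂, hbe₂⟩ := keyX ⟨g₁, hDX₁⟩

      by_cases hDY₂ : (Y ∩ Lt Y g₂).Nonempty
      · have := tc1 g₂ hDY₂ (by linarith)
        linarith
      · have hY₂ : be μ Y g₂ = m μ Y := notDY g₂ hDY₂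
        have : m μ Y ≤ m μ X - d := by linarith
        linarith
  have fullX : ∀ g, (X ∩ Rt X g).Nonempty := by
    by_contra hnot
    push_neg at hnot
    obtain ⟨gb, hgb⟩ := hnot
    obtain ⟨g₂, hal₂, hDX₂, hbe₂⟩ := keyX ⟨gb, by simp [hgb]⟩
    have hDY₂ : (Y ∩ Lt Y g₂).Nonempty := fullY g₂
    have := tc1 g₂ hDY₂ (by linarith)
    linarith
  -- global facts
  have factA' : ∀ g, al μ X g ≤ m μ Y - d := fun g => factA g (fullY g)
  have factB' : ∀ g, be μ Y g ≤ m μ X - d := fun g => factB g (fullX g)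
  -- α ≡ β
  have albe : ∀ g, al μ X g = be μ Y g := by
    intro g
    rcases le_total (be μ Y g) (al μ X g) with h | h
    · exact le_antisymm (tc1 g (fullY g) h) h
    · exact le_antisymm h (tc2 g (fullX g) h)
  exact ⟨albe, factA', factB', fullY, fullX⟩

end MaxStruct

section ZeroOne
variable [μ.IsHaarMeasure]

lemma zero_one {Y : Set G} (hY : IsClosed Y) (hpos : 0 < μ Y)
    (hbe : ∀ g, be μ Y g = 0) : μ Y = 1 := by
  have hYm := hY.measurableSet
  have hnull1 : ∀ g, μ (Lt Y g \ Y) = 0 := by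
    intro g
    have := hbe g
    rwa [be, m_zero_iff] at this
  have hnull2 : ∀ g, μ (Y \ Lt Y g) = 0 := by
    intro g
    have hid : Y \ Lt Y g = Lt (Lt Y g⁻¹ \ Y) g := by
      rw [Lt_diff, Lt_comp, mul_inv_cancel, Lt_one]
    rw [hid, mu_Lt]
    exact hnull1 g⁻¹
  -- a.e. translation invariance against any measurable set
  have hae : ∀ (S : Set G) (g : G), MeasurableSet S → μ (S ∩ Lt Y g) = μ (S ∩ Y) := by
    intro S g hS
    apply le_antisymm
    · calc μ (S ∩ Lt Y g) ≤ μ ((S ∩ Y) ∪ (Lt Y g \ Y)) := by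
            apply measure_mono
            intro z ⟨hz1, hz2⟩
            by_cases h : z ∈ Y
            · exact Or.inl ⟨hz1, h⟩
            · exact Or.inr ⟨hz2, h⟩
        _ ≤ μ (S ∩ Y) + μ (Lt Y g \ Y) := measure_union_le _ _
        _ = μ (S ∩ Y) := by rw [hnull1 g, add_zero]
    · calc μ (S ∩ Y) ≤ μ ((S ∩ Lt Y g) ∪ (Y \ Lt Y g)) := by
            apply measure_mono
            intro z ⟨hz1, hz2⟩
            by_cases h : z ∈ Lt Y g
            · exact Or.inl ⟨hz1, h⟩
            · exact Or.inr ⟨hz2, h⟩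
        _ ≤ μ (S ∩ Lt Y g) + μ (Y \ Lt Y g) := measure_union_le _ _
        _ = μ (S ∩ Lt Y g) := by rw [hnull2 g, add_zero]
  set ν : Measure G := (μ Y)⁻¹ • μ.restrict Y with hν
  have hνapp : ∀ S : Set G, MeasurableSet S → ν S = (μ Y)⁻¹ * μ (S ∩ Y) := by
    intro S hS
    rw [hν, Measure.smul_apply, Measure.restrict_apply hS, smul_eq_mul]
  haveI hνprob : IsProbabilityMeasure ν := by
    constructor
    rw [hνapp univ MeasurableSet.univ, univ_inter]
    exact ENNReal.inv_mul_cancel hpos.ne' (measure_ne_top μ Y)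
  haveI hνinv : ν.IsMulLeftInvariant := by
    constructor
    intro g
    ext S hS
    rw [Measure.map_apply (measurable_const_mul g) hS]
    have hpre : (fun x => g * x) ⁻¹' S = Lt S g⁻¹ := by
      ext x; simp [mem_Lt]
    rw [hpre, hνapp _ (measurableSet_Lt hS g⁻¹), hνapp S hS]
    congr 1
    have hid : Lt (Lt S g⁻¹ ∩ Y) g = S ∩ Lt Y g := by
      rw [Lt_inter, Lt_comp, mul_inv_cancel, Lt_one]
    calc μ (Lt S g⁻¹ ∩ Y) = μ (Lt (Lt S g⁻¹ ∩ Y) g) := (mu_Lt μ _ g).symm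
      _ = μ (S ∩ Lt Y g) := by rw [hid]
      _ = μ (S ∩ Y) := hae S g hS
  haveI hνhaar : ν.IsHaarMeasure := by
    refine { lt_top_of_isCompact := ?_, open_pos := ?_ }
    · intro K _
      exact (measure_lt_top ν K)
    · intro U hUo hUne
      rw [hνapp U hUo.measurableSet]
      have hμUY : 0 < μ (U ∩ Y) := by
        by_contra h
        push_neg at h
        have hUY0 : μ (U ∩ Y) = 0 := le_antisymm (by simpa using h) zero_le
        -- cover G by left translates of U
        obtain ⟨u₀, hu₀⟩ := hUne
        have hcover : (univ : Set G) ⊆ ⋃ g : G, Lt U g := by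
          intro x _
          refine mem_iUnion.2 ⟨x * u₀⁻¹, ?_⟩
          simp [mem_Lt, hu₀]
        obtain ⟨t, ht⟩ := isCompact_univ.elim_finite_subcover (fun g : G => Lt U g)
          (fun g => hUo.preimage (continuous_mul_left g⁻¹)) hcover
        have hYsum : μ Y ≤ ∑ g ∈ t, μ (Y ∩ Lt U g) := by
          calc μ Y = μ (Y ∩ ⋃ g ∈ t, Lt U g) := by
                rw [inter_eq_self_of_subset_left ((subset_univ Y).trans ht)]
          _ = μ (⋃ g ∈ t, Y ∩ Lt U g) := by rw [inter_iUnion₂]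
          _ ≤ ∑ g ∈ t, μ (Y ∩ Lt U g) := measure_biUnion_finset_le t _
        have hzero : ∀ g : G, μ (Y ∩ Lt U g) = 0 := by
          intro g
          have hid : Lt (Lt Y g⁻¹ ∩ U) g = Y ∩ Lt U g := by
            rw [Lt_inter, Lt_comp, mul_inv_cancel, Lt_one]
          have e1 : μ (Y ∩ Lt U g) = μ (Lt Y g⁻¹ ∩ U) := by
            rw [← hid, mu_Lt]
          have e2 : μ (U ∩ Lt Y g⁻¹) = μ (U ∩ Y) := hae U g⁻¹ hUo.measurableSet
          rw [e1, inter_comm, e2, hUY0]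
        rw [Finset.sum_congr rfl (fun g _ => hzero g)] at hYsum
        simp at hYsum
        exact hpos.ne' hYsum
      exact (ENNReal.mul_pos (by simp [measure_ne_top μ Y]) hμUY.ne').ne'
  have := Measure.isHaarMeasure_eq_of_isProbabilityMeasure ν μ
  have hYY : ν Y = 1 := by
    rw [hνapp Y hYm, inter_self]
    exact ENNReal.inv_mul_cancel hpos.ne' (measure_ne_top μ Y)
  rw [this] at hYY
  exact hYY

end ZeroOne

section Core
variable [ConnectedSpace G] [μ.IsHaarMeasure]

theorem core {P : Set G} (hP : IsClosed P) (hPlt : m μ P < 1)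
    {X₀ Y₀ : Set G} (hf₀ : Feas P X₀ Y₀) : sig μ X₀ Y₀ ≤ m μ P := by
  by_contra hgt
  push_neg at hgt
  classical
  set FS : Set ℝ := {r | ∃ X Y, Feas P X Y ∧ sig μ X Y = r} with hFS
  have hFSne : (sig μ X₀ Y₀) ∈ FS := ⟨X₀, Y₀, hf₀, rfl⟩
  have hFSbdd : BddAbove FS := by
    refine ⟨1, ?_⟩
    rintro r ⟨X, Y, hf, rfl⟩
    exact sig_le_one μ hPlt hf
  set sstar := sSup FS with hsstar
  have hs0 : sig μ X₀ Y₀ ≤ sstar := le_csSup hFSbdd hFSne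
  set d := sstar - m μ P with hd
  have hdpos : 0 < d := by rw [hd]; linarith
  have hub : ∀ X' Y', Feas P X' Y' → sig μ X' Y' ≤ sstar :=
    fun X' Y' hf => le_csSup hFSbdd ⟨X', Y', hf, rfl⟩
  -- a sequence approaching the sup
  have hseq : ∀ n : ℕ, ∃ X Y, Feas P X Y ∧ sstar - 1/(n+1) < sig μ X Y := by
    intro n
    have hlt : sstar - 1/(n+1) < sstar := by
      have : (0:ℝ) < 1/(n+1) := by positivity
      linarith
    obtain ⟨r, hrFS, hr⟩ := exists_lt_of_lt_csSup ⟨_, hFSne⟩ hlt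
    obtain ⟨X, Y, hf, rfl⟩ := hrFS
    exact ⟨X, Y, hf, hr⟩
  choose Xs Ys hfs hsigs using hseq
  have hbound : ∀ n, m μ (Xs n) ∈ Set.Icc (0:ℝ) 1 := fun n => ⟨m_nonneg μ _, m_le_one μ _⟩
  obtain ⟨a, _, φ, hφ, haconv⟩ :=
    (isCompact_Icc (a := (0:ℝ)) (b := 1)).tendsto_subseq hbound
  have hlow : Tendsto (fun n : ℕ => sstar - 1/(n+1)) atTop (𝓝 sstar) := by
    have h0 : Tendsto (fun n : ℕ => 1/((n:ℝ)+1)) atTop (𝓝 0) :=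
      tendsto_one_div_add_atTop_nhds_zero_nat
    simpa using tendsto_const_nhds.sub h0
  have hsigconv : Tendsto (fun n => sig μ (Xs (φ n)) (Ys (φ n))) atTop (𝓝 sstar) := by
    apply tendsto_of_tendsto_of_tendsto_of_le_of_le hlow tendsto_const_nhds
    · intro n
      have h1 := hsigs (φ n)
      have h2 : (1:ℝ)/(φ n + 1) ≤ 1/(n+1) := by
        apply one_div_le_one_div_of_le
        · positivity
        · have h3 : n ≤ φ n := hφ.le_apply
          have h4 : (n:ℝ) ≤ (φ n : ℝ) := Nat.cast_le.2 h3
          push_cast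
          linarith
      linarith
    · intro n
      exact hub _ _ (hfs (φ n))
  have hYconv : Tendsto (fun n => m μ (Ys (φ n))) atTop (𝓝 (sstar - a)) := by
    have : (fun n => m μ (Ys (φ n))) =
        fun n => sig μ (Xs (φ n)) (Ys (φ n)) - m μ (Xs (φ n)) := by
      funext n; simp [sig]
    rw [this]
    exact hsigconv.sub haconv
  obtain ⟨X₁, Y₁, hfXY₁, haX₁, hbY₁⟩ := attain μ hP (fun n => Xs (φ n)) (fun n => Ys (φ n))
    (fun n => hfs (φ n)) haconv hYconv
  have hsig₁ : sig μ X₁ Y₁ = sstar := by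
    refine le_antisymm (hub _ _ hfXY₁) ?_
    have : a + (sstar - a) ≤ sig μ X₁ Y₁ := by
      simp only [sig]; linarith
    linarith
  -- lexicographic stage : maximize m Y among maximizers
  set LS : Set ℝ := {r | ∃ X Y, Feas P X Y ∧ sig μ X Y = sstar ∧ m μ Y = r} with hLS
  have hLSne : m μ Y₁ ∈ LS := ⟨X₁, Y₁, hfXY₁, hsig₁, rfl⟩
  have hLSbdd : BddAbove LS := by
    refine ⟨1, ?_⟩
    rintro r ⟨X, Y, hf, _, rfl⟩
    exact m_le_one μ Y
  set L := sSup LS with hL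
  have hseq2 : ∀ n : ℕ, ∃ X Y, Feas P X Y ∧ sig μ X Y = sstar ∧ L - 1/(n+1) < m μ Y := by
    intro n
    have hlt : L - 1/(n+1) < L := by
      have : (0:ℝ) < 1/(n+1) := by positivity
      linarith
    obtain ⟨r, hrLS, hr⟩ := exists_lt_of_lt_csSup ⟨_, hLSne⟩ hlt
    obtain ⟨X, Y, hf, hs, rfl⟩ := hrLS
    exact ⟨X, Y, hf, hs, hr⟩
  choose X2 Y2 hf2 hs2 hm2 using hseq2
  have hY2conv : Tendsto (fun n => m μ (Y2 n)) atTop (𝓝 L) := by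
    have hlow2 : Tendsto (fun n : ℕ => L - 1/(n+1)) atTop (𝓝 L) := by
      have h0 : Tendsto (fun n : ℕ => 1/((n:ℝ)+1)) atTop (𝓝 0) :=
        tendsto_one_div_add_atTop_nhds_zero_nat
      simpa using tendsto_const_nhds.sub h0
    apply tendsto_of_tendsto_of_tendsto_of_le_of_le hlow2 tendsto_const_nhds
    · exact fun n => (hm2 n).le
    · exact fun n => le_csSup hLSbdd ⟨X2 n, Y2 n, hf2 n, hs2 n, rfl⟩
  have hX2conv : Tendsto (fun n => m μ (X2 n)) atTop (𝓝 (sstar - L)) := by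
    have : (fun n => m μ (X2 n)) = fun n => sstar - m μ (Y2 n) := by
      funext n
      have := hs2 n
      simp only [sig] at this
      linarith
    rw [this]
    exact tendsto_const_nhds.sub hY2conv
  obtain ⟨X, Y, hfXY, haX, hbY⟩ := attain μ hP X2 Y2 hf2 hX2conv hY2conv
  have hsigXY : sig μ X Y = sstar := by
    refine le_antisymm (hub _ _ hfXY) ?_
    have : (sstar - L) + L ≤ sig μ X Y := by
      simp only [sig]; linarith
    linarith
  have hmY : m μ Y = L := by
    refine le_antisymm ?_ hbY
    have : m μ X + m μ Y = sstar := hsigXY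
    linarith
  -- structure of the maximizer
  obtain ⟨albe, factA', factB', fullY, fullX⟩ :=
    max_struct μ hfXY hsigXY hub (by rw [hd]; ring) hdpos
  -- every left translate of Y is a.e. equal to Y
  have hbe0 : ∀ g, be μ Y g = 0 := by
    intro g
    obtain ⟨hf3, he1, he2⟩ := step2 μ hfXY g (fullX g)
    have hsig3 : sig μ (X ∩ Rt X g) (Y ∪ Lt Y g⁻¹) = sstar := by
      simp only [sig]
      rw [he1, he2, albe g]
      simp only [sig] at hsigXY
      linarith
    have hmem : m μ (Y ∪ Lt Y g⁻¹) ∈ LS := ⟨_, _, hf3, hsig3, rfl⟩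
    have hle := le_csSup hLSbdd hmem
    rw [he2, hmY] at hle
    have := be_nonneg μ Y g
    linarith
  -- bounds giving a contradiction with the 0-1 law
  obtain ⟨hXc, hXne, hYc, hYne, hsub⟩ := hfXY
  have hmYP : m μ Y ≤ m μ P := by
    obtain ⟨x, hx⟩ := hXne
    have hLtP : Lt Y x ⊆ P := by
      intro z hz
      have : x * (x⁻¹ * z) ∈ X * Y := Set.mul_mem_mul hx hz
      simpa [mul_assoc] using hsub this
    calc m μ Y = m μ (Lt Y x) := (m_Lt μ Y x).symm
      _ ≤ m μ P := m_mono μ hLtP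
  have hdY : d ≤ m μ Y := by
    have hmXP : m μ X ≤ m μ P := by
      obtain ⟨y, hy⟩ := hYne
      have hRtP : Rt X y ⊆ P := by
        intro z hz
        have : (z * y⁻¹) * y ∈ X * Y := Set.mul_mem_mul hz hy
        simpa using hsub this
      calc m μ X = m μ (Rt X y) := (m_Rt μ X y).symm
        _ ≤ m μ P := m_mono μ hRtP
    have : m μ X + m μ Y = sstar := hsigXY
    linarith
  have hμYpos : 0 < μ Y := by
    rw [← m_pos_iff]
    linarith
  have h1 : μ Y = 1 := zero_one μ hYc hμYpos hbe0
  have h2 : m μ Y = 1 := by rw [m, h1]; simp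
  linarith

end Core

section Wrapper
variable [μ.IsHaarMeasure]

lemma closure_singleton_subset {A : Set G} (hA : MeasurableSet A) {a : G} (ha : a ∈ A) :
    closure ({a} : Set G) ⊆ A := by
  have h1 : closure ({a} : Set G) = {a} * closure ({1} : Set G) := by
    rw [Set.singleton_mul]
    have h2 := (Homeomorph.mulLeft a).image_closure ({1} : Set G)
    have h3 : (Homeomorph.mulLeft a) '' ({1} : Set G) = {a} := by
      ext x; simp [Homeomorph.mulLeft]
    rw [h3] at h2
    exact h2.symm
  rw [h1, ← hA.mul_closure_one_eq]
  exact mul_subset_mul_right (singleton_subset_iff.2 ha)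

lemma inner_approx {A : Set G} (hA : MeasurableSet A) (hne : A.Nonempty) {ε : ℝ} (hε : 0 < ε) :
    ∃ K, K ⊆ A ∧ IsClosed K ∧ K.Nonempty ∧ m μ A - ε ≤ m μ K := by
  obtain ⟨a, ha⟩ := hne
  have hsing : closure ({a} : Set G) ⊆ A := closure_singleton_subset hA ha
  by_cases h0 : m μ A ≤ ε
  · exact ⟨closure {a}, hsing, isClosed_closure, ⟨a, subset_closure rfl⟩,
      by linarith [m_nonneg μ (closure ({a} : Set G))]⟩
  · push_neg at h0
    have hreg := innerRegularWRT_isCompact_isClosed_measure_ne_top_of_group (μ := μ)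
    have hr : ENNReal.ofReal (m μ A - ε) < μ A := by
      conv_rhs => rw [← ENNReal.ofReal_toReal (measure_ne_top μ A)]
      rw [ENNReal.ofReal_lt_ofReal_iff (by rw [← m]; linarith)]
      rw [← m]; linarith
    obtain ⟨K, hKA, ⟨hKcomp, hKcl⟩, hK⟩ := hreg ⟨hA, measure_ne_top μ A⟩ _ hr
    refine ⟨K ∪ closure {a}, union_subset hKA hsing, hKcl.union isClosed_closure,
      ⟨a, Or.inr (subset_closure rfl)⟩, ?_⟩
    have h2 : m μ A - ε ≤ m μ K := by
      have := ENNReal.toReal_mono (measure_ne_top μ K) hK.le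
      rwa [ENNReal.toReal_ofReal (by linarith)] at this
    linarith [m_mono μ (subset_union_left : K ⊆ K ∪ closure ({a} : Set G))]

theorem kemperman_main [ConnectedSpace G] {A B : Set G} (hAne : A.Nonempty) (hBne : B.Nonempty)
    (hA : MeasurableSet A) (hB : MeasurableSet B) (hAB : MeasurableSet (A * B)) :
    min 1 (μ A + μ B) ≤ μ (A * B) := by
  by_cases hone : 1 ≤ μ (A * B)
  · exact le_trans (min_le_left _ _) hone
  push_neg at hone
  refine le_trans (min_le_right _ _) ?_
  have hABlt : m μ (A * B) < 1 := by
    rw [m]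
    have h := (ENNReal.toReal_lt_toReal (measure_ne_top μ (A*B)) ENNReal.one_ne_top).2 hone
    simpa using h
  have key : m μ A + m μ B ≤ m μ (A * B) := by
    refine le_of_forall_pos_le_add ?_
    intro ε hε
    obtain ⟨K, hKA, hKcl, hKne, hKm⟩ := inner_approx μ hA hAne (half_pos hε)
    obtain ⟨L, hLB, hLcl, hLne, hLm⟩ := inner_approx μ hB hBne (half_pos hε)
    have hPcl : IsClosed (K * L) := hLcl.mul_left_of_isCompact hKcl.isCompact
    have hPsub : K * L ⊆ A * B := mul_subset_mul hKA hLB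
    have hPlt : m μ (K * L) < 1 := lt_of_le_of_lt (m_mono μ hPsub) hABlt
    have hfeas : Feas (K * L) K L := ⟨hKcl, hKne, hLcl, hLne, subset_rfl⟩
    have hcore := core μ hPcl hPlt hfeas
    simp only [sig] at hcore
    have := m_mono μ hPsub
    linarith
  have h1 : (μ A + μ B) ≠ ⊤ := by finiteness
  rw [← ENNReal.toReal_le_toReal h1 (measure_ne_top μ (A*B)),
    ENNReal.toReal_add (measure_ne_top μ A) (measure_ne_top μ B)]
  exact key

end Wrapper

end KempAux

open MeasureTheory Pointwise

/-- Kemperman's inequality: in a compact connected group `G` with Haar probability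
measure `μ`, any nonempty measurable `A, B` with `AB` measurable satisfy
`μ(AB) ≥ min(1, μ(A) + μ(B))`. -/
theorem kemperman {G : Type*} [Group G] [TopologicalSpace G] [IsTopologicalGroup G]
    [CompactSpace G] [ConnectedSpace G] [MeasurableSpace G] [BorelSpace G]
    (μ : Measure G) [μ.IsHaarMeasure] [IsProbabilityMeasure μ]
    (A B : Set G) (hA : A.Nonempty) (hB : B.Nonempty)
    (hAmeas : MeasurableSet A) (hBmeas : MeasurableSet B)
    (hABmeas : MeasurableSet (A * B)) :
    min 1 (μ A + μ B) ≤ μ (A * B) := by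
  haveI := KempAux.kem_rightInv μ
  haveI := KempAux.kem_invInv μ
  exact KempAux.kemperman_main μ hA hB hAmeas hBmeas hABmeas
end
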